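/- arXiv:1311.0645 — 6 statements merged into one kernel-verified Lean document; each statement's English description precedes it below -/
import Mathlib

section
/- Let p > 1, b > 0 and u₀ ≥ 0 be real numbers with b·u₀^{p−1} < c_p. Then the real equation u = b·u^p + u₀ has at least two distinct nonnegative real solutions u. -/
open Real Set

/-- The real superlinear equation `u = b u^p + u₀` has at least two distinct
nonnegative solutions whenever `b u₀^(p-1) < c_p`. -/
theorem two_real_solutions (p b u₀ : ℝ) (hp : 1 < p) (hb : 0 < b) (hu₀ : 0 ≤ u₀)
    (hsmall : b * u₀ ^ (p - 1) <
      ((p - 1) ^ ((1 - p) / p) + (p - 1) ^ (1 / p)) ^ (-p)) :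
    ∃ u v : ℝ, 0 ≤ u ∧ 0 ≤ v ∧ u ≠ v ∧
      u = b * u ^ p + u₀ ∧ v = b * v ^ p + u₀ := by
  have hp0 : (0:ℝ) < p := lt_trans one_pos hp
  set q : ℝ := p - 1 with hqdef
  have hq : 0 < q := by simp only [hqdef]; linarith
  have hbp : 0 < b * p := mul_pos hb hp0
  have hpq : q + 1 = p := by simp [hqdef]
  set m : ℝ := (b * p) ^ (-(1/q)) with hmdef
  have hm : 0 < m := rpow_pos_of_pos hbp _
  -- E1: c_p = p ^ (-p) * q ^ q
  have hE1 : (q ^ ((1 - p) / p) + q ^ (1 / p)) ^ (-p) = p ^ (-p) * q ^ q := by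
    have h1 : q ^ ((1 - p) / p) = q ^ (1/p) * q⁻¹ := by
      rw [show (1 - p)/p = 1/p + (-1) by field_simp; ring, rpow_add hq, rpow_neg_one]
    have h2 : q ^ ((1 - p) / p) + q ^ (1 / p) = q ^ (1/p) * (p / q) := by
      rw [h1]; field_simp; ring
    have h3 : (q ^ (1/p)) ^ (-p) = q⁻¹ := by
      rw [← rpow_mul hq.le, show (1/p) * (-p) = -1 by field_simp, rpow_neg_one]
    have h4 : (p / q) ^ (-p) = q ^ p * (p ^ p)⁻¹ := by
      rw [rpow_neg (by positivity), div_rpow hp0.le hq.le, inv_div, div_eq_mul_inv]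
    rw [h2, mul_rpow (rpow_nonneg hq.le _) (by positivity), h3, h4,
      rpow_neg hp0.le]
    have h5 : q ^ p = q ^ q * q := by
      rw [← hpq, rpow_add hq, rpow_one]
    rw [h5]; field_simp
  rw [hE1] at hsmall
  -- E2: b * m ^ p = m / p
  have hE2 : b * m ^ p = m / p := by
    have : m ^ p = m * (b*p)⁻¹ := by
      rw [hmdef, ← rpow_mul hbp.le, ← rpow_neg_one (b*p), ← rpow_add hbp,
        show -(1/q) * p = -(1/q) + -1 by field_simp; ring]
    rw [this]; field_simp
  -- E3: b * (m * q / p) ^ q = p ^ (-p) * q ^ q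
  have hE3 : b * (m * q / p) ^ q = p ^ (-p) * q ^ q := by
    have hmq : m ^ q = (b*p)⁻¹ := by
      rw [hmdef, ← rpow_mul hbp.le, show -(1/q) * q = -1 by field_simp, rpow_neg_one]
    rw [show m * q / p = m * (q / p) by ring,
      mul_rpow hm.le (by positivity), hmq, div_rpow hq.le hp0.le]
    have hpp : p ^ p = p ^ q * p := by
      rw [← hpq, rpow_add (by linarith : (0:ℝ) < q + 1), rpow_one]
    rw [rpow_neg hp0.le, hpp]
    field_simp
  -- hence u₀ < m * q / p
  have hu₀lt : u₀ < m * q / p := by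
    by_contra h
    push_neg at h
    have hpos : 0 < m * q / p := by positivity
    have := rpow_le_rpow hpos.le h hq.le
    have : b * (m * q / p) ^ q ≤ b * u₀ ^ q := by
      exact mul_le_mul_of_nonneg_left this hb.le
    rw [hE3] at this
    linarith
  -- g m < 0 where g u = b u^p + u₀ - u
  have hgm : b * m ^ p + u₀ < m := by
    rw [hE2]
    have : m / p + m * q / p = m := by field_simp [hqdef]; ring
    linarith
  -- continuity
  have hcont : Continuous fun u : ℝ => b * u ^ p + u₀ - u :=
    ((continuous_const.mul (continuous_rpow_const hp0.le)).add continuous_const).sub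
      continuous_id
  set g : ℝ → ℝ := fun u => b * u ^ p + u₀ - u with hgdef
  have hg0 : g 0 = u₀ := by simp [hgdef, zero_rpow hp0.ne']
  have hgm' : g m < 0 := by simp only [hgdef]; linarith
  -- first root on [0, m]
  obtain ⟨u, hu_mem, hu⟩ : ∃ u ∈ Icc (0:ℝ) m, g u = 0 := by
    have := intermediate_value_Icc' hm.le hcont.continuousOn (a := 0) (b := m)
    have h0 : (0:ℝ) ∈ Icc (g m) (g 0) := ⟨hgm'.le, by rw [hg0]; exact hu₀⟩
    obtain ⟨u, hu_mem, hu⟩ := this h0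
    exact ⟨u, hu_mem, hu⟩
  -- second root on [m, M]
  set M : ℝ := max (m + 1) ((2 / b) ^ (1/q)) with hMdef
  have hmM : m ≤ M := le_trans (by linarith) (le_max_left _ _)
  have hM0 : 0 < M := lt_of_lt_of_le hm hmM
  have hgM : 0 ≤ g M := by
    have h2b : (0:ℝ) < 2 / b := by positivity
    have hM2 : (2 / b) ^ (1/q) ≤ M := le_max_right _ _
    have hMq : 2 / b ≤ M ^ q := by
      calc 2 / b = ((2/b) ^ (1/q)) ^ q := by
            rw [← rpow_mul h2b.le, show (1/q) * q = 1 by field_simp, rpow_one]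
        _ ≤ M ^ q := rpow_le_rpow (rpow_nonneg h2b.le _) hM2 hq.le
    have hbMq : 2 ≤ b * M ^ q := by
      rw [div_le_iff₀ hb, mul_comm (M ^ q) b] at hMq
      exact hMq
    have hMp : M ^ p = M ^ q * M := by
      rw [← hpq, rpow_add hM0, rpow_one]
    have : 2 * M ≤ b * M ^ p := by
      rw [hMp, ← mul_assoc]
      exact mul_le_mul_of_nonneg_right hbMq hM0.le
    simp only [hgdef]
    nlinarith
  obtain ⟨v, hv_mem, hv⟩ : ∃ v ∈ Icc m M, g v = 0 := by
    have := intermediate_value_Icc hmM hcont.continuousOn (a := m) (b := M)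
    obtain ⟨v, hv_mem, hv⟩ := this ⟨hgm'.le, hgM⟩
    exact ⟨v, hv_mem, hv⟩
  refine ⟨u, v, hu_mem.1, le_trans hm.le hv_mem.1, ?_, by simp only [hgdef] at hu; linarith,
    by simp only [hgdef] at hv; linarith⟩
  have hum : u < m := lt_of_le_of_ne hu_mem.2 (fun h => by rw [h] at hu; linarith [hgm'])
  exact ne_of_lt (lt_of_lt_of_le hum hv_mem.1)
end

section
/- Let p > 1, b > 0 and u₀ > 0 be real numbers. Then there exists ρ > 0 such that u₀ + b·ρ^p < ρ if and only if b·u₀^{p−1} < c_p. -/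
/-- There exists `ρ > 0` with `u₀ + b ρ^p < ρ` if and only if
`b u₀^(p-1) < c_p`. -/
theorem exists_rho_iff (p b u₀ : ℝ) (hp : 1 < p) (hb : 0 < b) (hu₀ : 0 < u₀) :
    (∃ ρ : ℝ, 0 < ρ ∧ u₀ + b * ρ ^ p < ρ) ↔
      b * u₀ ^ (p - 1) < ((p - 1) ^ ((1 - p) / p) + (p - 1) ^ (1 / p)) ^ (-p) := by
  have hp0 : (0:ℝ) < p := by linarith
  have hq0 : (0:ℝ) < p - 1 := by linarith
  set q : ℝ := p - 1 with hqdef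
  have hpb : (0:ℝ) < p * b := by positivity
  -- Simplify the constant c_p
  have hsum : q ^ ((1 - p) / p) + q ^ (1 / p) = q ^ (1 / p) * (p / q) := by
    have h1 : (1 - p) / p = 1 / p + (-1) := by field_simp; ring
    rw [h1, Real.rpow_add hq0, Real.rpow_neg_one]
    field_simp
    ring
  have hc : (q ^ ((1 - p) / p) + q ^ (1 / p)) ^ (-p) = q ^ q / p ^ p := by
    rw [hsum, Real.mul_rpow (by positivity) (by positivity),
      ← Real.rpow_mul hq0.le]
    have h2 : 1 / p * (-p) = -1 := by field_simp
    rw [h2, Real.rpow_neg_one, Real.rpow_neg (by positivity),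
      Real.div_rpow hp0.le hq0.le, inv_div]
    rw [← Real.rpow_neg_one q, div_eq_mul_inv, div_eq_mul_inv, ← mul_assoc,
      ← Real.rpow_add hq0]
    congr 1
    congr 1
    rw [hqdef]; ring
  rw [hc]
  -- The threshold value M
  set ρ₀ : ℝ := (p * b) ^ (-(1/q)) with hρ₀def
  have hρ₀ : 0 < ρ₀ := Real.rpow_pos_of_pos hpb _
  set M : ℝ := q / p * ρ₀ with hMdef
  have hM : 0 < M := by positivity
  -- b * ρ₀ ^ p = ρ₀ / p
  have hbρ₀ : b * ρ₀ ^ p = ρ₀ / p := by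
    rw [hρ₀def, ← Real.rpow_mul hpb.le]
    have h4 : -(1/q) * p = -(1/q) + (-1) := by
      have hq1 : p - 1 ≠ 0 := ne_of_gt (by linarith)
      rw [hqdef]; field_simp; ring
    rw [h4, Real.rpow_add hpb, Real.rpow_neg_one]
    field_simp
  -- M ^ q = q^q / p^p / b
  have hpq : p ^ q * p = p ^ p := by
    rw [← Real.rpow_add_one hp0.ne' q]
    congr 1
    rw [hqdef]; ring
  have hMq : M ^ q = q ^ q / p ^ p / b := by
    rw [hMdef, Real.mul_rpow (by positivity) hρ₀.le, hρ₀def,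
      ← Real.rpow_mul hpb.le]
    have h3 : -(1/q) * q = -1 := by field_simp
    rw [h3, Real.rpow_neg_one, Real.div_rpow hq0.le hp0.le, ← hpq]
    have h5 : p ^ q ≠ 0 := by positivity
    have h6 : p ≠ 0 := hp0.ne'
    have h7 : b ≠ 0 := hb.ne'
    rw [mul_inv, div_div]
    field_simp
  -- RHS iff u₀ < M
  have hiff : b * u₀ ^ q < q ^ q / p ^ p ↔ u₀ < M := by
    rw [mul_comm, ← lt_div_iff₀ hb, ← hMq,
      Real.rpow_lt_rpow_iff hu₀.le hM.le hq0]
  rw [hiff]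
  constructor
  · rintro ⟨ρ, hρ, hlt⟩
    -- Young's inequality gives ρ ≤ b ρ^p + M
    have hconj : p.HolderConjugate (p / (p - 1)) :=
      Real.HolderConjugate.conjExponent hp
    have hy := Real.young_inequality_of_nonneg
      (a := (p * b) ^ (1/p) * ρ) (b := (p * b) ^ (-(1/p)))
      (by positivity) (by positivity) hconj
    have ha1 : (p * b) ^ (1/p) * ρ * (p * b) ^ (-(1/p)) = ρ := by
      rw [mul_right_comm, ← Real.rpow_add hpb]
      norm_num
    have ha2 : ((p * b) ^ (1/p) * ρ) ^ p / p = b * ρ ^ p := by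
      rw [Real.mul_rpow (by positivity) hρ.le, ← Real.rpow_mul hpb.le,
        one_div_mul_cancel hp0.ne', Real.rpow_one]
      field_simp
    have ha3 : ((p * b) ^ (-(1/p))) ^ (p / (p - 1)) / (p / (p - 1)) = M := by
      rw [← Real.rpow_mul hpb.le]
      have hex : -(1/p) * (p / (p - 1)) = -(1/q) := by
        rw [hqdef]; field_simp
      rw [hex, hMdef, hρ₀def, hqdef, div_div_eq_mul_div]
      ring
    rw [ha1, ha2, ha3] at hy
    linarith
  · intro hu
    refine ⟨ρ₀, hρ₀, ?_⟩
    rw [hbρ₀]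
    have hMeq : M = ρ₀ - ρ₀ / p := by
      rw [hMdef, hqdef]
      field_simp
    linarith
end

section
/- Let α ∈ (1,2) and a ∈ (0,1). There exists a constant γ > 0 such that for every y ∈ (−1,1) and every x ∈ (−a,a) with x ≠ y and 0 ≠ y, one has G_α(x,y) ≥ γ·G_α(0,y). -/
open MeasureTheory

/-- The Green function of the interval `(-1,1)` for the fractional Laplacian
`(-Δ)^(α/2)`: for `x, y ∈ (-1,1)`,
`G_α(x,y) = (2^α Γ(α/2)²)⁻¹ |x-y|^(α-1) ∫_0^{w(x,y)} r^(α/2-1) (r+1)^(-1/2) dr`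
with `w(x,y) = (1-x²)(1-y²)/(x-y)²`, and `G_α(x,y) = 0` otherwise. -/
noncomputable def greenFunction (α : ℝ) (x y : ℝ) : ℝ :=
  if x ∈ Set.Ioo (-1 : ℝ) 1 ∧ y ∈ Set.Ioo (-1 : ℝ) 1 then
    (2 ^ α * Real.Gamma (α / 2) ^ 2)⁻¹ * |x - y| ^ (α - 1) *
      ∫ r in (0 : ℝ)..((1 - x ^ 2) * (1 - y ^ 2) / (x - y) ^ 2),
        r ^ (α / 2 - 1) * (r + 1) ^ (-(1 : ℝ) / 2)
  else 0

lemma gc_contOn (α w : ℝ) :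
    ContinuousOn (fun r : ℝ => r ^ (α/2-1) * (r+1) ^ (-(1:ℝ)/2)) (Set.Ioc 0 w) := by
  apply ContinuousOn.mul
  · exact continuousOn_id.rpow_const (fun x hx => Or.inl (ne_of_gt hx.1))
  · exact (continuousOn_id.add continuousOn_const).rpow_const
      (fun x hx => Or.inl (by have := hx.1; show x + 1 ≠ 0; positivity))

lemma gc_intble (α : ℝ) {w : ℝ} (h1 : 1 < α) (hw : 0 ≤ w) :
    IntervalIntegrable (fun r => r ^ (α/2-1) * (r+1) ^ (-(1:ℝ)/2)) volume 0 w := by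
  have hexp : (-1:ℝ) < α/2 - 1 := by linarith
  refine (intervalIntegral.intervalIntegrable_rpow' hexp).mono_fun ?_ ?_
  · rw [Set.uIoc_of_le hw]
    exact (gc_contOn α w).aestronglyMeasurable measurableSet_Ioc
  · rw [Set.uIoc_of_le hw]
    filter_upwards [ae_restrict_mem measurableSet_Ioc] with r hr
    have hr0 : 0 < r := hr.1
    have h1r : (r+1) ^ (-(1:ℝ)/2) ≤ 1 :=
      Real.rpow_le_one_of_one_le_of_nonpos (by linarith) (by norm_num)
    have h2r : 0 ≤ (r+1) ^ (-(1:ℝ)/2) := Real.rpow_nonneg (by linarith) _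
    have h3r : 0 ≤ r ^ (α/2-1) := Real.rpow_nonneg hr0.le _
    simp only [Real.norm_eq_abs, abs_of_nonneg (mul_nonneg h3r h2r), abs_of_nonneg h3r]
    nlinarith

lemma gc_int_rpow (α : ℝ) {w : ℝ} (h1 : 1 < α) (hw : 0 ≤ w) :
    ∫ r in (0:ℝ)..w, r ^ (α/2-1) = (2/α) * w ^ (α/2) := by
  rw [integral_rpow (Or.inl (by linarith : (-1:ℝ) < α/2-1))]
  have h0 : (0:ℝ) ^ (α/2-1+1) = 0 := Real.zero_rpow (by linarith : (0:ℝ) < α/2-1+1).ne'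
  rw [h0]
  have : α/2-1+1 = α/2 := by ring
  rw [this]
  field_simp
  ring

lemma gc_F_lower (α : ℝ) {w : ℝ} (h1 : 1 < α) (hw : 0 ≤ w) :
    (2/α) * w ^ (α/2) * (w+1) ^ (-(1:ℝ)/2) ≤
      ∫ r in (0:ℝ)..w, r ^ (α/2-1) * (r+1) ^ (-(1:ℝ)/2) := by
  have key : (∫ r in (0:ℝ)..w, r ^ (α/2-1) * (w+1) ^ (-(1:ℝ)/2)) ≤
      ∫ r in (0:ℝ)..w, r ^ (α/2-1) * (r+1) ^ (-(1:ℝ)/2) := by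
    apply intervalIntegral.integral_mono_on hw
    · exact (intervalIntegral.intervalIntegrable_rpow'
        (by linarith : (-1:ℝ) < α/2-1)).mul_const _
    · exact gc_intble α h1 hw
    · intro r hr
      have hr0 : 0 ≤ r := hr.1
      have : (w+1) ^ (-(1:ℝ)/2) ≤ (r+1) ^ (-(1:ℝ)/2) :=
        Real.rpow_le_rpow_of_nonpos (by linarith) (by linarith [hr.2]) (by norm_num)
      exact mul_le_mul_of_nonneg_left this (Real.rpow_nonneg hr0 _)
  calc (2/α) * w ^ (α/2) * (w+1) ^ (-(1:ℝ)/2)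
      = (∫ r in (0:ℝ)..w, r ^ (α/2-1)) * (w+1) ^ (-(1:ℝ)/2) := by
        rw [gc_int_rpow α h1 hw]
    _ = ∫ r in (0:ℝ)..w, r ^ (α/2-1) * (w+1) ^ (-(1:ℝ)/2) := by
        rw [intervalIntegral.integral_mul_const]
    _ ≤ _ := key

lemma gc_F_upper (α : ℝ) {w : ℝ} (h1 : 1 < α) (hw : 0 ≤ w) :
    (∫ r in (0:ℝ)..w, r ^ (α/2-1) * (r+1) ^ (-(1:ℝ)/2)) ≤ (2/α) * w ^ (α/2) := by
  rw [← gc_int_rpow α h1 hw]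
  apply intervalIntegral.integral_mono_on hw (gc_intble α h1 hw)
    (intervalIntegral.intervalIntegrable_rpow' (by linarith : (-1:ℝ) < α/2-1))
  intro r hr
  have hr0 : 0 ≤ r := hr.1
  have h1r : (r+1) ^ (-(1:ℝ)/2) ≤ 1 :=
    Real.rpow_le_one_of_one_le_of_nonpos (by linarith) (by norm_num)
  have h3r : 0 ≤ r ^ (α/2-1) := Real.rpow_nonneg hr0 _
  nlinarith

lemma gc_F_upper_big (α : ℝ) {w : ℝ} (h1 : 1 < α) (h2 : α < 2) (hw : 1 ≤ w) :
    (∫ r in (0:ℝ)..w, r ^ (α/2-1) * (r+1) ^ (-(1:ℝ)/2)) ≤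
      2/α + (2/(α-1)) * w ^ ((α-1)/2) := by
  have hw0 : (0:ℝ) ≤ w := by linarith
  have hi1 : IntervalIntegrable (fun r => r ^ (α/2-1) * (r+1) ^ (-(1:ℝ)/2)) volume 0 1 :=
    gc_intble α h1 (by norm_num)
  have hi2 : IntervalIntegrable (fun r => r ^ (α/2-1) * (r+1) ^ (-(1:ℝ)/2)) volume 1 w :=
    (gc_intble α h1 hw0).mono_set (by
      rw [Set.uIcc_of_le hw, Set.uIcc_of_le hw0]
      exact Set.Icc_subset_Icc (by norm_num) le_rfl)
  rw [← intervalIntegral.integral_add_adjacent_intervals hi1 hi2]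
  have hpart1 : (∫ r in (0:ℝ)..1, r ^ (α/2-1) * (r+1) ^ (-(1:ℝ)/2)) ≤ 2/α := by
    have := gc_F_upper α h1 (le_refl (0:ℝ) |>.trans (by norm_num : (0:ℝ) ≤ 1))
    calc (∫ r in (0:ℝ)..1, r ^ (α/2-1) * (r+1) ^ (-(1:ℝ)/2))
        ≤ (2/α) * (1:ℝ) ^ (α/2) := gc_F_upper α h1 (by norm_num)
      _ = 2/α := by rw [Real.one_rpow]; ring
  have hpart2 : (∫ r in (1:ℝ)..w, r ^ (α/2-1) * (r+1) ^ (-(1:ℝ)/2)) ≤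
      (2/(α-1)) * w ^ ((α-1)/2) := by
    have hmono : (∫ r in (1:ℝ)..w, r ^ (α/2-1) * (r+1) ^ (-(1:ℝ)/2)) ≤
        ∫ r in (1:ℝ)..w, r ^ ((α-3)/2) := by
      apply intervalIntegral.integral_mono_on hw hi2
        (intervalIntegral.intervalIntegrable_rpow' (by linarith : (-1:ℝ) < (α-3)/2))
      intro r hr
      have hr1 : (1:ℝ) ≤ r := hr.1
      have hr0 : (0:ℝ) < r := by linarith
      have hb : (r+1) ^ (-(1:ℝ)/2) ≤ r ^ (-(1:ℝ)/2) :=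
        Real.rpow_le_rpow_of_nonpos hr0 (by linarith) (by norm_num)
      calc r ^ (α/2-1) * (r+1) ^ (-(1:ℝ)/2) ≤ r ^ (α/2-1) * r ^ (-(1:ℝ)/2) :=
            mul_le_mul_of_nonneg_left hb (Real.rpow_nonneg hr0.le _)
        _ = r ^ ((α-3)/2) := by
            rw [← Real.rpow_add hr0]; norm_num; ring_nf
    have hval : (∫ r in (1:ℝ)..w, r ^ ((α-3)/2)) =
        (w ^ ((α-1)/2) - 1) / ((α-1)/2) := by
      rw [integral_rpow (Or.inl (by linarith : (-1:ℝ) < (α-3)/2))]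
      norm_num
      rw [show (α-3)/2 + 1 = (α-1)/2 by ring]
    have hwpos : (0:ℝ) ≤ w ^ ((α-1)/2) := Real.rpow_nonneg hw0 _
    have ha1 : (0:ℝ) < α - 1 := by linarith
    calc (∫ r in (1:ℝ)..w, r ^ (α/2-1) * (r+1) ^ (-(1:ℝ)/2))
        ≤ (w ^ ((α-1)/2) - 1) / ((α-1)/2) := hmono.trans_eq hval
      _ ≤ (2/(α-1)) * w ^ ((α-1)/2) := by
          rw [div_le_iff₀ (by linarith : (0:ℝ) < (α-1)/2)]
          have hk : (2/(α-1)) * w ^ ((α-1)/2) * ((α-1)/2) = w ^ ((α-1)/2) := by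
            field_simp
          linarith
  linarith

lemma gc_algebra {P t α : ℝ} (hP : 0 < P) (ht : 0 < t) :
    t ^ (α-1) * ((P/t^2) ^ (α/2) * (P/t^2+1) ^ (-(1:ℝ)/2)) =
      P ^ (α/2) * (P+t^2) ^ (-(1:ℝ)/2) := by
  have ht2 : (0:ℝ) < t^2 := by positivity
  have hB : P/t^2 + 1 = (P+t^2)/t^2 := by field_simp
  have hD : (t^2) ^ (α/2) = t ^ α := by
    rw [← Real.rpow_natCast t 2, ← Real.rpow_mul ht.le]
    norm_num
    rw [show 2 * (α/2) = α by ring]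
  have hE : (t^2) ^ (-(1:ℝ)/2) = t⁻¹ := by
    rw [← Real.rpow_natCast t 2, ← Real.rpow_mul ht.le]
    norm_num [Real.rpow_neg_one]
  rw [Real.div_rpow hP.le ht2.le, hB, Real.div_rpow (by positivity) ht2.le, hD, hE,
    Real.rpow_sub ht, Real.rpow_one]
  have htα : (0:ℝ) < t ^ α := Real.rpow_pos_of_pos ht α
  field_simp

lemma gc_sq_pos {x : ℝ} (hx : x ∈ Set.Ioo (-1:ℝ) 1) : 0 < 1 - x^2 := by
  obtain ⟨h1, h2⟩ := hx; nlinarith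

lemma gc_c_pos (α : ℝ) (h1 : 1 < α) : 0 < (2 ^ α * Real.Gamma (α/2) ^ 2)⁻¹ := by
  have h := Real.Gamma_pos_of_pos (by linarith : (0:ℝ) < α/2)
  positivity

lemma gc_green_lower {α x y : ℝ} (h1 : 1 < α) (h2 : α < 2)
    (hx : x ∈ Set.Ioo (-1:ℝ) 1) (hy : y ∈ Set.Ioo (-1:ℝ) 1) (hxy : x ≠ y) :
    (2 ^ α * Real.Gamma (α/2) ^ 2)⁻¹ * (2/α) * ((1-x^2)*(1-y^2)) ^ (α/2) *
      (5:ℝ) ^ (-(1:ℝ)/2) ≤ greenFunction α x y := by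
  have hc := gc_c_pos α h1
  set c := (2 ^ α * Real.Gamma (α/2) ^ 2)⁻¹ with hc_def
  have ht : 0 < |x - y| := abs_pos.mpr (sub_ne_zero.mpr hxy)
  have hP : 0 < (1-x^2)*(1-y^2) := mul_pos (gc_sq_pos hx) (gc_sq_pos hy)
  set P := (1-x^2)*(1-y^2) with hP_def
  set t := |x - y| with ht_def
  have ht2 : (x-y)^2 = t^2 := (sq_abs _).symm
  have hw0 : 0 ≤ P / t^2 := by positivity
  rw [greenFunction, if_pos ⟨hx, hy⟩]
  rw [show (1 - x ^ 2) * (1 - y ^ 2) / (x - y) ^ 2 = P / t^2 by rw [ht2]]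
  have hF := gc_F_lower α h1 hw0
  have hmul : c * t ^ (α-1) * ((2/α) * (P/t^2) ^ (α/2) * (P/t^2+1) ^ (-(1:ℝ)/2)) ≤
      c * t ^ (α-1) * ∫ r in (0:ℝ)..(P/t^2), r ^ (α/2-1) * (r+1) ^ (-(1:ℝ)/2) := by
    apply mul_le_mul_of_nonneg_left hF
    positivity
  refine le_trans ?_ (le_of_le_of_eq hmul (by ring))
  have halg : c * t ^ (α-1) * ((2/α) * (P/t^2) ^ (α/2) * (P/t^2+1) ^ (-(1:ℝ)/2)) =
      c * (2/α) * (P ^ (α/2) * (P+t^2) ^ (-(1:ℝ)/2)) := by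
    rw [show c * t ^ (α-1) * ((2/α) * (P/t^2) ^ (α/2) * (P/t^2+1) ^ (-(1:ℝ)/2)) =
        c * (2/α) * (t ^ (α-1) * ((P/t^2) ^ (α/2) * (P/t^2+1) ^ (-(1:ℝ)/2))) by ring,
      gc_algebra hP ht]
  rw [halg]
  have h5 : (5:ℝ) ^ (-(1:ℝ)/2) ≤ (P+t^2) ^ (-(1:ℝ)/2) := by
    apply Real.rpow_le_rpow_of_nonpos (by positivity) ?_ (by norm_num)
    have hP1 : P ≤ 1 := by
      have := gc_sq_pos hx; have := gc_sq_pos hy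
      nlinarith [hx.1, hx.2, hy.1, hy.2]
    have htle : t ≤ 2 := by
      rw [ht_def, abs_sub_le_iff]
      constructor <;> nlinarith [hx.1, hx.2, hy.1, hy.2]
    nlinarith
  calc c * (2/α) * P ^ (α/2) * (5:ℝ) ^ (-(1:ℝ)/2)
      ≤ c * (2/α) * P ^ (α/2) * (P+t^2) ^ (-(1:ℝ)/2) := by
        apply mul_le_mul_of_nonneg_left h5; positivity
    _ = c * (2/α) * (P ^ (α/2) * (P+t^2) ^ (-(1:ℝ)/2)) := by ring

lemma gc_algebra2 {P t α : ℝ} (hP : 0 < P) (ht : 0 < t) :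
    t ^ (α-1) * (P/t^2) ^ (α/2) = P ^ (α/2) / t := by
  have ht2 : (0:ℝ) < t^2 := by positivity
  have hD : (t^2) ^ (α/2) = t ^ α := by
    rw [← Real.rpow_natCast t 2, ← Real.rpow_mul ht.le]
    norm_num
    rw [show 2 * (α/2) = α by ring]
  rw [Real.div_rpow hP.le ht2.le, hD, Real.rpow_sub ht, Real.rpow_one]
  have htα : (0:ℝ) < t ^ α := Real.rpow_pos_of_pos ht α
  field_simp

lemma gc_green_zero {α y : ℝ} (hy : y ∈ Set.Ioo (-1:ℝ) 1) (hy0 : y ≠ 0) :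
    greenFunction α 0 y = (2 ^ α * Real.Gamma (α/2) ^ 2)⁻¹ * |y| ^ (α-1) *
      ∫ r in (0:ℝ)..((1-y^2)/y^2), r ^ (α/2-1) * (r+1) ^ (-(1:ℝ)/2) := by
  rw [greenFunction, if_pos ⟨by constructor <;> norm_num, hy⟩]
  norm_num

lemma gc_green_upper_boundary {α y : ℝ} (h1 : 1 < α)
    (hy : y ∈ Set.Ioo (-1:ℝ) 1) (hy0 : y ≠ 0) :
    greenFunction α 0 y ≤
      (2 ^ α * Real.Gamma (α/2) ^ 2)⁻¹ * (2/α) * ((1-y^2) ^ (α/2) / |y|) := by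
  have hc := gc_c_pos α h1
  have hQ : 0 < 1 - y^2 := gc_sq_pos hy
  have hty : 0 < |y| := abs_pos.mpr hy0
  have hy2 : y^2 = |y|^2 := (sq_abs y).symm
  have hw0 : 0 ≤ (1-y^2)/y^2 := by positivity
  rw [gc_green_zero hy hy0]
  have hF := gc_F_upper α h1 hw0
  calc (2 ^ α * Real.Gamma (α/2) ^ 2)⁻¹ * |y| ^ (α-1) *
        ∫ r in (0:ℝ)..((1-y^2)/y^2), r ^ (α/2-1) * (r+1) ^ (-(1:ℝ)/2)
      ≤ (2 ^ α * Real.Gamma (α/2) ^ 2)⁻¹ * |y| ^ (α-1) *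
        ((2/α) * ((1-y^2)/y^2) ^ (α/2)) := by
        apply mul_le_mul_of_nonneg_left hF; positivity
    _ = (2 ^ α * Real.Gamma (α/2) ^ 2)⁻¹ * (2/α) *
        (|y| ^ (α-1) * ((1-y^2)/|y|^2) ^ (α/2)) := by rw [← hy2]; ring
    _ = (2 ^ α * Real.Gamma (α/2) ^ 2)⁻¹ * (2/α) * ((1-y^2) ^ (α/2) / |y|) := by
        rw [gc_algebra2 hQ hty]

lemma gc_F_nonneg (α : ℝ) {w : ℝ} (hw : 0 ≤ w) :
    0 ≤ ∫ r in (0:ℝ)..w, r ^ (α/2-1) * (r+1) ^ (-(1:ℝ)/2) := by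
  apply intervalIntegral.integral_nonneg hw
  intro r hr
  have := hr.1
  positivity

lemma gc_green_upper_mid {α y : ℝ} (h1 : 1 < α) (h2 : α < 2)
    (hy : y ∈ Set.Ioo (-1:ℝ) 1) (hy0 : y ≠ 0) :
    greenFunction α 0 y ≤
      (2 ^ α * Real.Gamma (α/2) ^ 2)⁻¹ * (2/α + 2/(α-1)) := by
  have hc := gc_c_pos α h1
  have hQ : 0 < 1 - y^2 := gc_sq_pos hy
  have hty : 0 < |y| := abs_pos.mpr hy0
  have hty1 : |y| ≤ 1 := by
    rw [abs_le]; exact ⟨hy.1.le, hy.2.le⟩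
  have hyp1 : |y| ^ (α-1) ≤ 1 := Real.rpow_le_one hty.le hty1 (by linarith)
  have hyp0 : 0 ≤ |y| ^ (α-1) := Real.rpow_nonneg hty.le _
  have hy2 : y^2 = |y|^2 := (sq_abs y).symm
  have hw0 : 0 ≤ (1-y^2)/y^2 := by positivity
  have h2apos : (0:ℝ) < 2/α := div_pos two_pos (by linarith)
  rw [gc_green_zero hy hy0]
  rcases le_or_gt ((1-y^2)/y^2) 1 with hcase | hcase
  · -- small w₀
    have hF := gc_F_upper α h1 hw0
    have hF1 : (∫ r in (0:ℝ)..((1-y^2)/y^2), r ^ (α/2-1) * (r+1) ^ (-(1:ℝ)/2)) ≤ 2/α := by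
      refine hF.trans ?_
      have : ((1-y^2)/y^2) ^ (α/2) ≤ 1 := Real.rpow_le_one hw0 hcase (by linarith)
      nlinarith [this, h2apos]
    have hFnn := gc_F_nonneg α hw0
    have h2a : (0:ℝ) < 2/(α-1) := by
      have : (0:ℝ) < α - 1 := by linarith
      positivity
    have : |y| ^ (α-1) *
        (∫ r in (0:ℝ)..((1-y^2)/y^2), r ^ (α/2-1) * (r+1) ^ (-(1:ℝ)/2)) ≤ 2/α := by
      calc |y| ^ (α-1) * _ ≤ 1 * (2/α) := mul_le_mul hyp1 hF1 hFnn zero_le_one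
        _ = 2/α := one_mul _
    nlinarith
  · -- large w₀
    have hF := gc_F_upper_big α h1 h2 hcase.le
    have hkey : |y| ^ (α-1) * ((1-y^2)/y^2) ^ ((α-1)/2) = (1-y^2) ^ ((α-1)/2) := by
      have hE : |y| ^ (α-1) = (y^2) ^ ((α-1)/2) := by
        rw [hy2, ← Real.rpow_natCast |y| 2, ← Real.rpow_mul hty.le]
        rw [show ((2:ℕ):ℝ) * ((α-1)/2) = α - 1 by push_cast; ring]
      rw [hE, ← Real.mul_rpow (by positivity) hw0]
      rw [show y^2 * ((1-y^2)/y^2) = 1 - y^2 by field_simp]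
    have hle1 : (1-y^2) ^ ((α-1)/2) ≤ 1 :=
      Real.rpow_le_one hQ.le (by nlinarith) (by linarith)
    have h2a : (0:ℝ) < 2/(α-1) := by
      have : (0:ℝ) < α - 1 := by linarith
      positivity
    have hFnn := gc_F_nonneg α hw0
    have step : |y| ^ (α-1) *
        (∫ r in (0:ℝ)..((1-y^2)/y^2), r ^ (α/2-1) * (r+1) ^ (-(1:ℝ)/2)) ≤
        |y| ^ (α-1) * (2/α + (2/(α-1)) * ((1-y^2)/y^2) ^ ((α-1)/2)) :=
      mul_le_mul_of_nonneg_left hF hyp0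
    have expand : |y| ^ (α-1) * (2/α + (2/(α-1)) * ((1-y^2)/y^2) ^ ((α-1)/2)) =
        |y| ^ (α-1) * (2/α) + (2/(α-1)) * ((1-y^2) ^ ((α-1)/2)) := by
      rw [mul_add]
      congr 1
      rw [show |y| ^ (α-1) * ((2/(α-1)) * ((1-y^2)/y^2) ^ ((α-1)/2)) =
        (2/(α-1)) * (|y| ^ (α-1) * ((1-y^2)/y^2) ^ ((α-1)/2)) by ring, hkey]
    have hfin : |y| ^ (α-1) *
        (∫ r in (0:ℝ)..((1-y^2)/y^2), r ^ (α/2-1) * (r+1) ^ (-(1:ℝ)/2)) ≤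
        2/α + 2/(α-1) := by
      rw [expand] at step
      have t1 : |y| ^ (α-1) * (2/α) ≤ 2/α := by nlinarith [h2apos]
      have t2 : (2/(α-1)) * ((1-y^2) ^ ((α-1)/2)) ≤ 2/(α-1) := by nlinarith
      linarith
    nlinarith

lemma gc_green_zero_nonneg {α y : ℝ} (hy : y ∈ Set.Ioo (-1:ℝ) 1) (hy0 : y ≠ 0)
    (h1 : 1 < α) : 0 ≤ greenFunction α 0 y := by
  have hc := gc_c_pos α h1
  have hQ : 0 < 1 - y^2 := gc_sq_pos hy
  have hw0 : 0 ≤ (1-y^2)/y^2 := by positivity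
  rw [gc_green_zero hy hy0]
  have := gc_F_nonneg α hw0
  positivity


/-- Lemma 3 (Green-function comparison): there is `γ > 0` with
`G_α(x,y) ≥ γ G_α(0,y)` for all `x ∈ (-a,a)` and `y ∈ (-1,1)`. -/
theorem green_comparison (α a : ℝ) (hα : α ∈ Set.Ioo (1 : ℝ) 2)
    (ha : a ∈ Set.Ioo (0 : ℝ) 1) :
    ∃ γ : ℝ, 0 < γ ∧ ∀ y ∈ Set.Ioo (-1 : ℝ) 1, ∀ x ∈ Set.Ioo (-a) a,
      x ≠ y → y ≠ 0 → γ * greenFunction α 0 y ≤ greenFunction α x y := by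
  obtain ⟨h1, h2⟩ := hα
  obtain ⟨ha0, ha1⟩ := ha
  set b : ℝ := (1+a)/2 with hb_def
  have hb0 : 0 < b := by rw [hb_def]; linarith
  have hab : a < b := by rw [hb_def]; linarith
  have hb1 : b < 1 := by rw [hb_def]; linarith
  have hK5 : 0 < (5:ℝ) ^ (-(1:ℝ)/2) := Real.rpow_pos_of_pos (by norm_num) _
  have h2apos : (0:ℝ) < 2/α := div_pos two_pos (by linarith)
  have h2bpos : (0:ℝ) < 2/(α-1) := div_pos two_pos (by linarith)
  have hM : (0:ℝ) < 2/α + 2/(α-1) := by linarith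
  have ha2 : (0:ℝ) < 1 - a^2 := by nlinarith
  have hb2 : (0:ℝ) < 1 - b^2 := by nlinarith
  have hApos : 0 < (1-a^2) ^ (α/2) := Real.rpow_pos_of_pos ha2 _
  have hBpos : 0 < (1-b^2) ^ (α/2) := Real.rpow_pos_of_pos hb2 _
  refine ⟨min ((1-a^2) ^ (α/2) * (5:ℝ) ^ (-(1:ℝ)/2) * b)
      ((2/α) * (1-a^2) ^ (α/2) * (1-b^2) ^ (α/2) * (5:ℝ) ^ (-(1:ℝ)/2) / (2/α + 2/(α-1))),
    lt_min (by positivity) (by positivity), ?_⟩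
  intro y hy x hx hxy hy0
  have hxIoo : x ∈ Set.Ioo (-1:ℝ) 1 := ⟨by linarith [hx.1], by linarith [hx.2]⟩
  have hc := gc_c_pos α h1
  have hx2 : 1 - a^2 ≤ 1 - x^2 := by nlinarith [hx.1, hx.2]
  have hQy : 0 < 1 - y^2 := gc_sq_pos hy
  have hQy_pos : 0 < (1-y^2) ^ (α/2) := Real.rpow_pos_of_pos hQy _
  have hG0nn := gc_green_zero_nonneg hy hy0 h1
  have hcc : (0:ℝ) ≤ (2 ^ α * Real.Gamma (α/2) ^ 2)⁻¹ * (2/α) * (5:ℝ) ^ (-(1:ℝ)/2) := by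
    positivity
  -- lower bound for G(x,y)
  have hlow := gc_green_lower h1 h2 hxIoo hy hxy
  have hra : (1-a^2) ^ (α/2) ≤ (1-x^2) ^ (α/2) :=
    Real.rpow_le_rpow ha2.le hx2 (by linarith)
  have hsplit : ((1-x^2)*(1-y^2)) ^ (α/2) = (1-x^2) ^ (α/2) * (1-y^2) ^ (α/2) :=
    Real.mul_rpow (by linarith) hQy.le
  have hlow2 : (2 ^ α * Real.Gamma (α/2) ^ 2)⁻¹ * (2/α) *
      ((1-a^2) ^ (α/2) * (1-y^2) ^ (α/2)) * (5:ℝ) ^ (-(1:ℝ)/2) ≤ greenFunction α x y := by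
    refine le_trans ?_ hlow
    rw [hsplit]
    have hstep : (1-a^2) ^ (α/2) * (1-y^2) ^ (α/2) ≤ (1-x^2) ^ (α/2) * (1-y^2) ^ (α/2) :=
      mul_le_mul_of_nonneg_right hra hQy_pos.le
    have := mul_le_mul_of_nonneg_left hstep hcc
    calc (2 ^ α * Real.Gamma (α/2) ^ 2)⁻¹ * (2/α) *
          ((1-a^2) ^ (α/2) * (1-y^2) ^ (α/2)) * (5:ℝ) ^ (-(1:ℝ)/2)
        = (2 ^ α * Real.Gamma (α/2) ^ 2)⁻¹ * (2/α) * (5:ℝ) ^ (-(1:ℝ)/2) *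
          ((1-a^2) ^ (α/2) * (1-y^2) ^ (α/2)) := by ring
      _ ≤ (2 ^ α * Real.Gamma (α/2) ^ 2)⁻¹ * (2/α) * (5:ℝ) ^ (-(1:ℝ)/2) *
          ((1-x^2) ^ (α/2) * (1-y^2) ^ (α/2)) := this
      _ = (2 ^ α * Real.Gamma (α/2) ^ 2)⁻¹ * (2/α) *
          ((1-x^2) ^ (α/2) * (1-y^2) ^ (α/2)) * (5:ℝ) ^ (-(1:ℝ)/2) := by ring
  rcases le_or_gt b |y| with hyb | hyb
  · -- y near the boundary
    have hup := gc_green_upper_boundary h1 hy hy0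
    have hyne : |y| ≠ 0 := ne_of_gt (abs_pos.mpr hy0)
    have hupm : |y| * greenFunction α 0 y ≤
        (2 ^ α * Real.Gamma (α/2) ^ 2)⁻¹ * (2/α) * (1-y^2) ^ (α/2) := by
      have h' := mul_le_mul_of_nonneg_left hup (abs_nonneg y)
      calc |y| * greenFunction α 0 y
          ≤ |y| * ((2 ^ α * Real.Gamma (α/2) ^ 2)⁻¹ * (2/α) * ((1-y^2) ^ (α/2) / |y|)) := h'
        _ = (2 ^ α * Real.Gamma (α/2) ^ 2)⁻¹ * (2/α) * (1-y^2) ^ (α/2) * (|y| * |y|⁻¹) := by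
            rw [div_eq_mul_inv]; ring
        _ = (2 ^ α * Real.Gamma (α/2) ^ 2)⁻¹ * (2/α) * (1-y^2) ^ (α/2) := by
            rw [mul_inv_cancel₀ hyne, mul_one]
    have hbG : b * greenFunction α 0 y ≤ |y| * greenFunction α 0 y :=
      mul_le_mul_of_nonneg_right hyb hG0nn
    calc min ((1-a^2) ^ (α/2) * (5:ℝ) ^ (-(1:ℝ)/2) * b)
          ((2/α) * (1-a^2) ^ (α/2) * (1-b^2) ^ (α/2) * (5:ℝ) ^ (-(1:ℝ)/2) / (2/α + 2/(α-1))) *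
          greenFunction α 0 y
        ≤ (1-a^2) ^ (α/2) * (5:ℝ) ^ (-(1:ℝ)/2) * b * greenFunction α 0 y :=
          mul_le_mul_of_nonneg_right (min_le_left _ _) hG0nn
      _ = (1-a^2) ^ (α/2) * (5:ℝ) ^ (-(1:ℝ)/2) * (b * greenFunction α 0 y) := by ring
      _ ≤ (1-a^2) ^ (α/2) * (5:ℝ) ^ (-(1:ℝ)/2) * (|y| * greenFunction α 0 y) :=
          mul_le_mul_of_nonneg_left hbG (by positivity)
      _ ≤ (1-a^2) ^ (α/2) * (5:ℝ) ^ (-(1:ℝ)/2) *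
          ((2 ^ α * Real.Gamma (α/2) ^ 2)⁻¹ * (2/α) * (1-y^2) ^ (α/2)) :=
          mul_le_mul_of_nonneg_left hupm (by positivity)
      _ = (2 ^ α * Real.Gamma (α/2) ^ 2)⁻¹ * (2/α) *
          ((1-a^2) ^ (α/2) * (1-y^2) ^ (α/2)) * (5:ℝ) ^ (-(1:ℝ)/2) := by ring
      _ ≤ greenFunction α x y := hlow2
  · -- y in the middle
    have hup := gc_green_upper_mid h1 h2 hy hy0
    have hQyb : (1-b^2) ^ (α/2) ≤ (1-y^2) ^ (α/2) := by
      apply Real.rpow_le_rpow hb2.le ?_ (by linarith)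
      have : y^2 < b^2 := by nlinarith [abs_nonneg y, sq_abs y]
      linarith
    have hlow3 : (2 ^ α * Real.Gamma (α/2) ^ 2)⁻¹ * (2/α) *
        ((1-a^2) ^ (α/2) * (1-b^2) ^ (α/2)) * (5:ℝ) ^ (-(1:ℝ)/2) ≤ greenFunction α x y := by
      refine le_trans ?_ hlow2
      have hstep := mul_le_mul_of_nonneg_left hQyb hApos.le
      have := mul_le_mul_of_nonneg_left hstep hcc
      calc (2 ^ α * Real.Gamma (α/2) ^ 2)⁻¹ * (2/α) *
            ((1-a^2) ^ (α/2) * (1-b^2) ^ (α/2)) * (5:ℝ) ^ (-(1:ℝ)/2)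
          = (2 ^ α * Real.Gamma (α/2) ^ 2)⁻¹ * (2/α) * (5:ℝ) ^ (-(1:ℝ)/2) *
            ((1-a^2) ^ (α/2) * (1-b^2) ^ (α/2)) := by ring
        _ ≤ (2 ^ α * Real.Gamma (α/2) ^ 2)⁻¹ * (2/α) * (5:ℝ) ^ (-(1:ℝ)/2) *
            ((1-a^2) ^ (α/2) * (1-y^2) ^ (α/2)) := this
        _ = (2 ^ α * Real.Gamma (α/2) ^ 2)⁻¹ * (2/α) *
            ((1-a^2) ^ (α/2) * (1-y^2) ^ (α/2)) * (5:ℝ) ^ (-(1:ℝ)/2) := by ring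
    have hγBM : ((2/α) * (1-a^2) ^ (α/2) * (1-b^2) ^ (α/2) * (5:ℝ) ^ (-(1:ℝ)/2) /
        (2/α + 2/(α-1))) * (2/α + 2/(α-1)) =
        (2/α) * (1-a^2) ^ (α/2) * (1-b^2) ^ (α/2) * (5:ℝ) ^ (-(1:ℝ)/2) :=
      div_mul_cancel₀ _ (ne_of_gt hM)
    calc min ((1-a^2) ^ (α/2) * (5:ℝ) ^ (-(1:ℝ)/2) * b)
          ((2/α) * (1-a^2) ^ (α/2) * (1-b^2) ^ (α/2) * (5:ℝ) ^ (-(1:ℝ)/2) / (2/α + 2/(α-1))) *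
          greenFunction α 0 y
        ≤ ((2/α) * (1-a^2) ^ (α/2) * (1-b^2) ^ (α/2) * (5:ℝ) ^ (-(1:ℝ)/2) /
            (2/α + 2/(α-1))) * greenFunction α 0 y :=
          mul_le_mul_of_nonneg_right (min_le_right _ _) hG0nn
      _ ≤ ((2/α) * (1-a^2) ^ (α/2) * (1-b^2) ^ (α/2) * (5:ℝ) ^ (-(1:ℝ)/2) /
            (2/α + 2/(α-1))) * ((2 ^ α * Real.Gamma (α/2) ^ 2)⁻¹ * (2/α + 2/(α-1))) :=
          mul_le_mul_of_nonneg_left hup (by positivity)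
      _ = (2 ^ α * Real.Gamma (α/2) ^ 2)⁻¹ *
          (((2/α) * (1-a^2) ^ (α/2) * (1-b^2) ^ (α/2) * (5:ℝ) ^ (-(1:ℝ)/2) /
            (2/α + 2/(α-1))) * (2/α + 2/(α-1))) := by ring
      _ = (2 ^ α * Real.Gamma (α/2) ^ 2)⁻¹ * (2/α) *
          ((1-a^2) ^ (α/2) * (1-b^2) ^ (α/2)) * (5:ℝ) ^ (-(1:ℝ)/2) := by
          rw [hγBM]; ring
      _ ≤ greenFunction α x y := hlow3
end

section
/- Let α ∈ (1,2) and let f : [−1,1] → ℝ be continuous, nonnegative, symmetric (f(−x) = f(x) for all x ∈ [−1,1]) and unimodal (nondecreasing on [−1,0] and nonincreasing on [0,1]). Define u(x) = ∫_{−1}^{1} G_α(x,y) f(y) dy for x ∈ [−1,1]. Then u is symmetric (u(−x) = u(x) for all x ∈ [−1,1]), nondecreasing on [−1,0] and nonincreasing on [0,1]. -/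
open MeasureTheory

section GPSUlemmasA
open intervalIntegral Set

namespace GPSU

noncomputable def jint (α q s : ℝ) : ℝ := s ^ (α/2 - 1) * (s + q) ^ (-(1:ℝ)/2)

noncomputable def J (α q D : ℝ) : ℝ := ∫ s in (0:ℝ)..D, jint α q s

lemma meas_rpow_const (c : ℝ) : Measurable (fun x : ℝ => x ^ c) := by
  refine measurable_of_continuousOn_compl_singleton (0 : ℝ) ?_
  exact continuousOn_of_forall_continuousAt fun x hx =>
    Real.continuousAt_rpow_const x c (Or.inl hx)

lemma jint_nonneg {α q : ℝ} (hq : 0 ≤ q) {s : ℝ} (hs : 0 ≤ s) : 0 ≤ jint α q s :=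
  mul_nonneg (Real.rpow_nonneg hs _) (Real.rpow_nonneg (by linarith) _)

lemma jint_meas (α q : ℝ) : Measurable (jint α q) :=
  (meas_rpow_const _).mul ((meas_rpow_const (-(1:ℝ)/2)).comp (measurable_id.add_const q))

lemma jint_le {α q s : ℝ} (hq : 0 ≤ q) (hs : 0 < s) :
    jint α q s ≤ s ^ (α/2 - 3/2) := by
  have h1 : (s + q) ^ (-(1:ℝ)/2) ≤ s ^ (-(1:ℝ)/2) :=
    Real.rpow_le_rpow_of_nonpos hs (by linarith) (by norm_num)
  calc jint α q s ≤ s ^ (α/2-1) * s ^ (-(1:ℝ)/2) :=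
        mul_le_mul_of_nonneg_left h1 (Real.rpow_nonneg hs.le _)
    _ = s ^ (α/2 - 3/2) := by rw [← Real.rpow_add hs]; ring_nf

lemma jint_integrable {α q : ℝ} (hα : 1 < α) (hq : 0 ≤ q) {D : ℝ} (hD : 0 ≤ D) :
    IntervalIntegrable (jint α q) volume 0 D := by
  have hr : (-1:ℝ) < α/2 - 3/2 := by linarith
  have hbig : IntervalIntegrable (fun s : ℝ => s ^ (α/2 - 3/2)) volume 0 D :=
    intervalIntegrable_rpow' hr
  rw [intervalIntegrable_iff_integrableOn_Ioc_of_le hD] at hbig ⊢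
  refine Integrable.mono hbig ((jint_meas α q).aestronglyMeasurable) ?_
  exact ae_restrict_of_forall_mem measurableSet_Ioc (fun s hs => by
      rw [Real.norm_eq_abs, abs_of_nonneg (jint_nonneg hq hs.1.le),
        Real.norm_eq_abs, abs_of_nonneg (Real.rpow_nonneg hs.1.le _)]
      exact jint_le hq hs.1)

end GPSU

namespace GPSU
variable {α q q₁ q₂ D D₁ D₂ : ℝ}

lemma jint_integrable' (hα : 1 < α) (hq : 0 ≤ q) (hD₁ : 0 ≤ D₁) (hD : D₁ ≤ D₂) :
    IntervalIntegrable (jint α q) volume D₁ D₂ :=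
  (jint_integrable hα hq (hD₁.trans hD)).mono_set (by
    rw [Set.uIcc_of_le hD, Set.uIcc_of_le (hD₁.trans hD)]
    exact Set.Icc_subset_Icc hD₁ le_rfl)

lemma J_nonneg (hq : 0 ≤ q) (hD : 0 ≤ D) : 0 ≤ J α q D :=
  intervalIntegral.integral_nonneg hD (fun s hs => jint_nonneg hq hs.1)

lemma J_split (hα : 1 < α) (hq : 0 ≤ q) (hD₁ : 0 ≤ D₁) (hD : D₁ ≤ D₂) :
    J α q D₂ = J α q D₁ + ∫ s in D₁..D₂, jint α q s :=
  (intervalIntegral.integral_add_adjacent_intervals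
    (jint_integrable hα hq hD₁) (jint_integrable' hα hq hD₁ hD)).symm

/-- J is monotone in the upper limit D. -/
lemma J_mono_D (hα : 1 < α) (hq : 0 ≤ q) (hD₁ : 0 ≤ D₁) (hD : D₁ ≤ D₂) :
    J α q D₁ ≤ J α q D₂ := by
  rw [J_split hα hq hD₁ hD]
  have : 0 ≤ ∫ s in D₁..D₂, jint α q s :=
    intervalIntegral.integral_nonneg hD (fun s hs => jint_nonneg hq (hD₁.trans hs.1))
  linarith

/-- jint is antitone in q, for s ≥ 0, one of them s+q > 0. -/
lemma jint_anti (hq₁ : 0 ≤ q₁) (hq : q₁ ≤ q₂) {s : ℝ} (hs : 0 ≤ s) (hpos : 0 < s + q₁) :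
    jint α q₂ s ≤ jint α q₁ s := by
  refine mul_le_mul_of_nonneg_left ?_ (Real.rpow_nonneg hs _)
  exact Real.rpow_le_rpow_of_nonpos hpos (by linarith) (by norm_num)

/-- interval-integral of jint is antitone in q (a.e. argument handles s=0). -/
lemma Jpiece_anti_q (hα : 1 < α) (hq₁ : 0 ≤ q₁) (hq : q₁ ≤ q₂) (hD₁ : 0 ≤ D₁) (hD : D₁ ≤ D₂) :
    (∫ s in D₁..D₂, jint α q₂ s) ≤ ∫ s in D₁..D₂, jint α q₁ s := by
  refine intervalIntegral.integral_mono_ae_restrict hD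
    (jint_integrable' hα (hq₁.trans hq) hD₁ hD) (jint_integrable' hα hq₁ hD₁ hD) ?_
  have h0 : (volume.restrict (Set.Icc D₁ D₂)) {(0:ℝ)} = 0 :=
    le_antisymm ((Measure.restrict_apply_le _ _).trans (by simp)) zero_le
  filter_upwards [ae_restrict_mem measurableSet_Icc,
    (measure_eq_zero_iff_ae_notMem.mp h0)] with s hs hs0
  have hspos : 0 < s + q₁ := by
    rcases lt_or_eq_of_le (hD₁.trans hs.1) with h | h
    · linarith
    · exact absurd h.symm hs0
  exact jint_anti hq₁ hq (hD₁.trans hs.1) hspos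

/-- The key exchange inequality:
`J(q₁,D') + J(q₂,D) ≥ J(q₂,D') + J(q₁,D)` is wrong way; we need:
for q₂ ≤ q₁ and D' ≤ D : J α q₂ D + J α q₁ D' ≥ J α q₁ D + J α q₂ D'. -/
lemma J_exchange (hα : 1 < α) (hq₂ : 0 ≤ q₂) (hq : q₂ ≤ q₁) (hD' : 0 ≤ D₁) (hD : D₁ ≤ D₂) :
    J α q₁ D₂ + J α q₂ D₁ ≤ J α q₂ D₂ + J α q₁ D₁ := by
  rw [J_split hα (hq₂.trans hq) hD' hD, J_split hα hq₂ hD' hD]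
  have := Jpiece_anti_q hα hq₂ hq hD' hD
  linarith

end GPSU


namespace GPSU

/-- Change of variables `r = s / P` in the Green-function integral. -/
lemma key_identity {α P D : ℝ} (hP : 0 < P) (hD : 0 ≤ D) :
    Real.sqrt P ^ (α - 1) *
      ∫ r in (0 : ℝ)..(D / P), r ^ (α / 2 - 1) * (r + 1) ^ (-(1 : ℝ) / 2) =
    J α P D := by
  set p : ℝ := Real.sqrt P with hpdef
  have hp : 0 < p := Real.sqrt_pos.mpr hP
  have hPp : P = p ^ (2 : ℝ) := by rw [Real.rpow_two, hpdef, Real.sq_sqrt hP.le]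
  have hcomp : (∫ s in (0:ℝ)..D, (fun r => r ^ (α / 2 - 1) * (r + 1) ^ (-(1 : ℝ) / 2)) (s / P))
      = P • ∫ r in (0:ℝ)/P..D/P, r ^ (α / 2 - 1) * (r + 1) ^ (-(1 : ℝ) / 2) :=
    intervalIntegral.integral_comp_div (a := 0) (b := D) (fun r => r ^ (α / 2 - 1) * (r + 1) ^ (-(1 : ℝ) / 2)) hP.ne'
  rw [zero_div, smul_eq_mul] at hcomp
  have h2 : (∫ r in (0:ℝ)..(D / P), r ^ (α / 2 - 1) * (r + 1) ^ (-(1 : ℝ) / 2))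
      = P⁻¹ * ∫ s in (0:ℝ)..D, (fun r => r ^ (α / 2 - 1) * (r + 1) ^ (-(1 : ℝ) / 2)) (s / P) := by
    rw [hcomp, inv_mul_cancel_left₀ hP.ne']
  rw [h2, ← mul_assoc, ← intervalIntegral.integral_const_mul]
  refine intervalIntegral.integral_congr (fun s hs => ?_)
  rw [Set.uIcc_of_le hD] at hs
  have hs0 : (0:ℝ) ≤ s := hs.1
  have hsP : (0:ℝ) ≤ s + P := by linarith
  show p ^ (α - 1) * P⁻¹ * ((s/P) ^ (α / 2 - 1) * (s/P + 1) ^ (-(1 : ℝ) / 2)) = jint α P s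
  rw [show s/P + 1 = (s+P)/P by field_simp, Real.div_rpow hs0 hP.le, Real.div_rpow hsP hP.le]
  have hcoef : p ^ (α - 1) * P⁻¹ * ((P ^ (α/2-1))⁻¹ * (P ^ (-(1:ℝ)/2))⁻¹) = 1 := by
    rw [hPp, ← Real.rpow_mul hp.le, ← Real.rpow_mul hp.le, ← Real.rpow_neg hp.le,
      ← Real.rpow_neg hp.le, ← Real.rpow_neg hp.le, ← Real.rpow_add hp, ← Real.rpow_add hp,
      ← Real.rpow_add hp, show α - 1 + -2 + (-(2 * (α/2-1)) + -(2 * (-(1:ℝ)/2))) = 0 by ring,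
      Real.rpow_zero]
  show _ = s ^ (α/2-1) * (s + P) ^ (-(1:ℝ)/2)
  linear_combination (s ^ (α/2-1) * ((s+P) ^ (-(1:ℝ)/2))) * hcoef

end GPSU

end GPSUlemmasA

section GPSUlemmas
open intervalIntegral Set

namespace GPSU

/-- The reparametrized Green function; equals `greenFunction` off the diagonal. -/
noncomputable def Ghat (α x y : ℝ) : ℝ :=
  if x ∈ Set.Ioo (-1 : ℝ) 1 ∧ y ∈ Set.Ioo (-1 : ℝ) 1 then
    (2 ^ α * Real.Gamma (α / 2) ^ 2)⁻¹ * J α ((x - y) ^ 2) ((1 - x ^ 2) * (1 - y ^ 2))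
  else 0

lemma c_pos {α : ℝ} (hα : 1 < α) : 0 < (2 ^ α * Real.Gamma (α / 2) ^ 2)⁻¹ := by
  have h1 : (0:ℝ) < 2 ^ α := Real.rpow_pos_of_pos (by norm_num) _
  have h2 : 0 < Real.Gamma (α / 2) := Real.Gamma_pos_of_pos (by linarith)
  positivity

lemma sq_lt_one_of_mem {x : ℝ} (hx : x ∈ Set.Ioo (-1:ℝ) 1) : x ^ 2 < 1 := by
  obtain ⟨h1, h2⟩ := hx; nlinarith

lemma green_eq_Ghat {α x y : ℝ} (hα : 1 < α) (hxy : x ≠ y) :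
    greenFunction α x y = Ghat α x y := by
  unfold greenFunction Ghat
  by_cases h : x ∈ Set.Ioo (-1:ℝ) 1 ∧ y ∈ Set.Ioo (-1:ℝ) 1
  · rw [if_pos h, if_pos h]
    have hP : (0:ℝ) < (x - y) ^ 2 := by
      have := sub_ne_zero.mpr hxy
      positivity
    have hD : (0:ℝ) ≤ (1 - x ^ 2) * (1 - y ^ 2) := by
      have := sq_lt_one_of_mem h.1; have := sq_lt_one_of_mem h.2; nlinarith
    rw [mul_assoc, ← key_identity (α := α) hP hD, Real.sqrt_sq_eq_abs]
  · rw [if_neg h, if_neg h]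

lemma Ghat_nonneg {α x y : ℝ} (hα : 1 < α) : 0 ≤ Ghat α x y := by
  unfold Ghat
  split_ifs with h
  · refine mul_nonneg (c_pos hα).le (J_nonneg (by positivity) ?_)
    have := sq_lt_one_of_mem h.1; have := sq_lt_one_of_mem h.2; nlinarith
  · exact le_refl 0

lemma Ghat_zero_left {α x y : ℝ} (hx : x ∉ Set.Ioo (-1:ℝ) 1) : Ghat α x y = 0 := by
  unfold Ghat; rw [if_neg (fun h => hx h.1)]

lemma Ghat_zero_right {α x y : ℝ} (hy : y ∉ Set.Ioo (-1:ℝ) 1) : Ghat α x y = 0 := by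
  unfold Ghat; rw [if_neg (fun h => hy h.2)]

lemma Ghat_neg_neg (α x y : ℝ) : Ghat α (-x) (-y) = Ghat α x y := by
  unfold Ghat
  have h1 : (-x - -y) ^ 2 = (x - y) ^ 2 := by ring
  have h2 : (1 - (-x) ^ 2) * (1 - (-y) ^ 2) = (1 - x ^ 2) * (1 - y ^ 2) := by ring
  rw [h1, h2]
  refine if_congr ?_ rfl rfl
  simp only [Set.mem_Ioo]
  constructor <;> rintro ⟨⟨a, b⟩, c, d⟩ <;>
    exact ⟨⟨by linarith, by linarith⟩, by linarith, by linarith⟩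

lemma green_neg_neg (α x y : ℝ) : greenFunction α (-x) (-y) = greenFunction α x y := by
  unfold greenFunction
  have h1 : |(-x) - -y| = |x - y| := by rw [show (-x) - -y = -(x - y) by ring, abs_neg]
  have h2 : (1 - (-x) ^ 2) * (1 - (-y) ^ 2) = (1 - x ^ 2) * (1 - y ^ 2) := by ring
  have h3 : ((-x) - -y) ^ 2 = (x - y) ^ 2 := by ring
  rw [h1, h2, h3]
  refine if_congr ?_ rfl rfl
  simp only [Set.mem_Ioo]
  constructor <;> rintro ⟨⟨a, b⟩, c, d⟩ <;>
    exact ⟨⟨by linarith, by linarith⟩, by linarith, by linarith⟩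

/-- Monotonicity (i): moving `x` closer to both `0` and `y` increases `Ghat`. -/
lemma Ghat_mono {α x₁ x₂ y : ℝ} (hα : 1 < α) (hx : x₂ ^ 2 ≤ x₁ ^ 2)
    (hxy : (x₂ - y) ^ 2 ≤ (x₁ - y) ^ 2) (hx₂ : x₂ ∈ Set.Ioo (-1:ℝ) 1) :
    Ghat α x₁ y ≤ Ghat α x₂ y := by
  by_cases hy : y ∈ Set.Ioo (-1:ℝ) 1
  · by_cases hx₁ : x₁ ∈ Set.Ioo (-1:ℝ) 1
    · unfold Ghat
      rw [if_pos ⟨hx₁, hy⟩, if_pos ⟨hx₂, hy⟩]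
      refine mul_le_mul_of_nonneg_left ?_ (c_pos hα).le
      have hB : (0:ℝ) ≤ 1 - y ^ 2 := (sq_lt_one_of_mem hy).le |> fun h => by linarith
      have hD₁ : (0:ℝ) ≤ (1 - x₁ ^ 2) * (1 - y ^ 2) := by
        have := sq_lt_one_of_mem hx₁; nlinarith
      have hDle : (1 - x₁ ^ 2) * (1 - y ^ 2) ≤ (1 - x₂ ^ 2) * (1 - y ^ 2) := by nlinarith
      calc J α ((x₁ - y) ^ 2) ((1 - x₁ ^ 2) * (1 - y ^ 2))
          ≤ J α ((x₂ - y) ^ 2) ((1 - x₁ ^ 2) * (1 - y ^ 2)) :=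
            Jpiece_anti_q hα (by positivity) hxy le_rfl hD₁
        _ ≤ J α ((x₂ - y) ^ 2) ((1 - x₂ ^ 2) * (1 - y ^ 2)) :=
            J_mono_D hα (by positivity) hD₁ hDle
    · rw [Ghat_zero_left hx₁]; exact Ghat_nonneg hα
  · rw [Ghat_zero_right hy, Ghat_zero_right hy]

end GPSU

namespace GPSU

/-- Pairing inequality (ii): for `-1 ≤ x₁ ≤ x₂ ≤ 0`, `y` to the right of the midpoint
`m = (x₁+x₂)/2` with reflection `z = x₁ + x₂ - y ≥ -1`, the kernel mass moves inward. -/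
lemma Ghat_pair {α x₁ x₂ y : ℝ} (hα : 1 < α) (h1 : -1 ≤ x₁) (h12 : x₁ ≤ x₂) (h20 : x₂ ≤ 0)
    (hym : (x₁ + x₂) / 2 ≤ y) (hy1 : y ≤ 1) (hz1 : -1 ≤ x₁ + x₂ - y) :
    Ghat α x₁ y + Ghat α x₁ (x₁ + x₂ - y) ≤ Ghat α x₂ y + Ghat α x₂ (x₁ + x₂ - y) := by
  set z : ℝ := x₁ + x₂ - y with hzdef
  by_cases hy : y ∈ Set.Ioo (-1:ℝ) 1
  · -- y interior
    have hzy : z ≤ y := by simp only [hzdef]; linarith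
    by_cases hz : z ∈ Set.Ioo (-1:ℝ) 1
    · -- main case
      by_cases hx₁ : x₁ ∈ Set.Ioo (-1:ℝ) 1
      · have hx₂ : x₂ ∈ Set.Ioo (-1:ℝ) 1 := ⟨lt_of_lt_of_le hx₁.1 h12, lt_of_le_of_lt h20 (by norm_num)⟩
        unfold Ghat
        rw [if_pos ⟨hx₁, hy⟩, if_pos ⟨hx₁, hz⟩, if_pos ⟨hx₂, hy⟩, if_pos ⟨hx₂, hz⟩]
        rw [show (x₁ - z) ^ 2 = (x₂ - y) ^ 2 by simp only [hzdef]; ring,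
          show (x₂ - z) ^ 2 = (x₁ - y) ^ 2 by simp only [hzdef]; ring]
        rw [← mul_add, ← mul_add]
        refine mul_le_mul_of_nonneg_left ?_ (c_pos hα).le
        set A₁ : ℝ := 1 - x₁ ^ 2
        set A₂ : ℝ := 1 - x₂ ^ 2
        set B : ℝ := 1 - y ^ 2
        set B' : ℝ := 1 - z ^ 2
        have hA₂ : 0 ≤ A₂ := by have := sq_lt_one_of_mem hx₂; simp only [A₂]; linarith
        have hA₁ : 0 ≤ A₁ := by have := sq_lt_one_of_mem hx₁; simp only [A₁]; linarith
        have hA₁₂ : A₁ ≤ A₂ := by simp only [A₁, A₂]; nlinarith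
        have hB : 0 ≤ B := by have := sq_lt_one_of_mem hy; simp only [B]; linarith
        have hB' : 0 ≤ B' := by have := sq_lt_one_of_mem hz; simp only [B']; linarith
        have hBB : B' ≤ B := by simp only [B, B', hzdef]; nlinarith
        have hP : (x₂ - y) ^ 2 ≤ (x₁ - y) ^ 2 := by nlinarith
        -- step 1: enlarge A₁ to A₂
        have s1 : J α ((x₁ - y) ^ 2) (A₁ * B) ≤ J α ((x₁ - y) ^ 2) (A₂ * B) :=
          J_mono_D hα (by positivity) (mul_nonneg hA₁ hB) (mul_le_mul_of_nonneg_right hA₁₂ hB)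
        have s2 : J α ((x₂ - y) ^ 2) (A₁ * B') ≤ J α ((x₂ - y) ^ 2) (A₂ * B') :=
          J_mono_D hα (by positivity) (mul_nonneg hA₁ hB') (mul_le_mul_of_nonneg_right hA₁₂ hB')
        -- step 2: exchange
        have s3 : J α ((x₁ - y) ^ 2) (A₂ * B) + J α ((x₂ - y) ^ 2) (A₂ * B') ≤
            J α ((x₂ - y) ^ 2) (A₂ * B) + J α ((x₁ - y) ^ 2) (A₂ * B') :=
          J_exchange hα (sq_nonneg _) hP (mul_nonneg hA₂ hB')
            (mul_le_mul_of_nonneg_left hBB hA₂)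
        linarith
      · -- x₁ = -1 boundary: left side vanishes
        rw [Ghat_zero_left hx₁, Ghat_zero_left hx₁]
        have := Ghat_nonneg (x := x₂) (y := y) hα
        have := Ghat_nonneg (x := x₂) (y := z) hα
        linarith
    · -- z = -1 boundary: z-terms vanish, reduce to Ghat_mono
      rw [Ghat_zero_right hz, Ghat_zero_right hz]
      by_cases hx₂ : x₂ ∈ Set.Ioo (-1:ℝ) 1
      · have := Ghat_mono (α := α) (x₁ := x₁) (x₂ := x₂) (y := y) hα (by nlinarith)
          (by nlinarith) hx₂
        linarith
      · have hx2 : x₂ = -1 := by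
          simp only [Set.mem_Ioo, not_and_or, not_lt] at hx₂
          rcases hx₂ with h | h
          · linarith
          · linarith
        have hx1 : x₁ = -1 := by linarith
        have e : ∀ t : ℝ, Ghat α (-1) t = 0 := fun t =>
          Ghat_zero_left (by simp [Set.mem_Ioo])
        rw [hx1, hx2, e]
  · -- y on the boundary
    have hy' : y = 1 ∨ y = -1 := by
      simp only [Set.mem_Ioo, not_and_or, not_lt] at hy
      rcases hy with h | h
      · right; linarith
      · left; linarith
    rcases hy' with h | h
    · -- y = 1 forces x₁ = x₂ = 0 and z = -1
      have hx2 : x₂ = 0 := by linarith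
      have hx1 : x₁ = 0 := by linarith
      have hzv : z = -1 := by simp only [hzdef]; linarith
      have ey : ∀ x' : ℝ, Ghat α x' y = 0 := fun _ =>
        Ghat_zero_right (by rw [h]; simp [Set.mem_Ioo])
      have ez : ∀ x' : ℝ, Ghat α x' z = 0 := fun _ =>
        Ghat_zero_right (by rw [hzv]; simp [Set.mem_Ioo])
      rw [ey, ey, ez, ez]
    · -- y = -1 forces x₁ = x₂ = -1
      have hx2 : x₂ = -1 := by linarith
      have hx1 : x₁ = -1 := by linarith
      have e : ∀ t : ℝ, Ghat α (-1) t = 0 := fun t =>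
        Ghat_zero_left (by simp [Set.mem_Ioo])
      rw [hx1, hx2, e, e]

end GPSU

namespace GPSU

/-- `greenFunction` is bounded off the diagonal. -/
lemma Ghat_le {α x y : ℝ} (hα : 1 < α) : Ghat α x y ≤
    (2 ^ α * Real.Gamma (α / 2) ^ 2)⁻¹ * J α 0 1 := by
  unfold Ghat
  split_ifs with h
  · refine mul_le_mul_of_nonneg_left ?_ (c_pos hα).le
    have hx2 := sq_lt_one_of_mem h.1
    have hy2 := sq_lt_one_of_mem h.2
    have hD0 : (0:ℝ) ≤ (1 - x ^ 2) * (1 - y ^ 2) := by nlinarith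
    calc J α ((x - y) ^ 2) ((1 - x ^ 2) * (1 - y ^ 2))
        ≤ J α 0 ((1 - x ^ 2) * (1 - y ^ 2)) :=
          Jpiece_anti_q hα le_rfl (sq_nonneg _) le_rfl hD0
      _ ≤ J α 0 1 := J_mono_D hα le_rfl hD0 (by nlinarith)
  · exact mul_nonneg (c_pos hα).le (J_nonneg le_rfl zero_le_one)

lemma green_meas {α : ℝ} (hα : 1 < α) (x : ℝ) :
    Measurable (fun y => greenFunction α x y) := by
  have hΦ : Monotone (fun b : ℝ => J α 1 (max b 0)) := by
    intro b₁ b₂ hb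
    exact J_mono_D hα zero_le_one (le_max_right _ _) (max_le_max hb le_rfl)
  have hw : Measurable (fun y : ℝ => (1 - x ^ 2) * (1 - y ^ 2) / (x - y) ^ 2) := by
    fun_prop
  have habs : Measurable (fun y : ℝ => |x - y| ^ (α - 1)) :=
    (meas_rpow_const (α - 1)).comp (measurable_const.sub measurable_id).abs
  have hbody : Measurable (fun y : ℝ =>
      (2 ^ α * Real.Gamma (α / 2) ^ 2)⁻¹ * |x - y| ^ (α - 1) *
        J α 1 (max ((1 - x ^ 2) * (1 - y ^ 2) / (x - y) ^ 2) 0)) :=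
    ((measurable_const.mul habs)).mul (hΦ.measurable.comp hw)
  have hset : MeasurableSet {y : ℝ | x ∈ Set.Ioo (-1:ℝ) 1 ∧ y ∈ Set.Ioo (-1:ℝ) 1} := by
    by_cases hx : x ∈ Set.Ioo (-1:ℝ) 1
    · have : {y : ℝ | x ∈ Set.Ioo (-1:ℝ) 1 ∧ y ∈ Set.Ioo (-1:ℝ) 1} = Set.Ioo (-1:ℝ) 1 := by
        ext y; simp [hx]
      rw [this]; exact measurableSet_Ioo
    · have : {y : ℝ | x ∈ Set.Ioo (-1:ℝ) 1 ∧ y ∈ Set.Ioo (-1:ℝ) 1} = ∅ := by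
        ext y; simp [hx]
      rw [this]; exact MeasurableSet.empty
  have : (fun y => greenFunction α x y) = fun y =>
      if x ∈ Set.Ioo (-1:ℝ) 1 ∧ y ∈ Set.Ioo (-1:ℝ) 1 then
        (2 ^ α * Real.Gamma (α / 2) ^ 2)⁻¹ * |x - y| ^ (α - 1) *
          J α 1 (max ((1 - x ^ 2) * (1 - y ^ 2) / (x - y) ^ 2) 0) else 0 := by
    funext y
    unfold greenFunction
    by_cases h : x ∈ Set.Ioo (-1:ℝ) 1 ∧ y ∈ Set.Ioo (-1:ℝ) 1
    · rw [if_pos h, if_pos h]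
      have h1 := sq_lt_one_of_mem h.1
      have h2 := sq_lt_one_of_mem h.2
      have hD : (0:ℝ) ≤ (1 - x ^ 2) * (1 - y ^ 2) := by nlinarith
      rw [max_eq_left (div_nonneg hD (sq_nonneg _))]
      rfl
    · rw [if_neg h, if_neg h]
  rw [this]
  exact Measurable.ite hset hbody measurable_const

end GPSU

namespace GPSU

lemma ae_ne (x : ℝ) : ∀ᵐ y : ℝ, y ≠ x := by
  have h0 : (volume : Measure ℝ) {x} = 0 := measure_singleton x
  exact measure_eq_zero_iff_ae_notMem.mp h0

lemma green_ae_bound {α : ℝ} (hα : 1 < α) (x : ℝ) :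
    ∀ᵐ y : ℝ, ‖greenFunction α x y‖ ≤ (2 ^ α * Real.Gamma (α / 2) ^ 2)⁻¹ * J α 0 1 := by
  filter_upwards [ae_ne x] with y hy
  rw [green_eq_Ghat hα (Ne.symm hy), Real.norm_eq_abs, abs_of_nonneg (Ghat_nonneg hα)]
  exact Ghat_le hα

lemma green_prod_integrable {α : ℝ} (hα : 1 < α) {f : ℝ → ℝ}
    (hfcont : ContinuousOn f (Set.Icc (-1 : ℝ) 1)) (x : ℝ) :
    IntervalIntegrable (fun y => greenFunction α x y * f y) volume (-1) 1 := by
  rw [intervalIntegrable_iff_integrableOn_Ioc_of_le (by norm_num : (-1:ℝ) ≤ 1)]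
  have hfi : IntegrableOn f (Set.Ioc (-1:ℝ) 1) :=
    (hfcont.integrableOn_Icc).mono_set Set.Ioc_subset_Icc_self
  exact Integrable.bdd_mul hfi ((green_meas hα x).aestronglyMeasurable.restrict)
    (ae_restrict_of_ae (green_ae_bound hα x))

lemma Ghat_prod_integrable {α : ℝ} (hα : 1 < α) {f : ℝ → ℝ}
    (hfcont : ContinuousOn f (Set.Icc (-1 : ℝ) 1)) (x : ℝ) :
    IntervalIntegrable (fun y => Ghat α x y * f y) volume (-1) 1 := by
  have h := green_prod_integrable hα hfcont x
  rw [intervalIntegrable_iff_integrableOn_Ioc_of_le (by norm_num : (-1:ℝ) ≤ 1)] at h ⊢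
  refine h.congr ?_
  refine ae_restrict_of_ae ?_
  filter_upwards [ae_ne x] with y hy
  rw [green_eq_Ghat hα (Ne.symm hy)]

lemma green_Ghat_integral {α : ℝ} (hα : 1 < α) (f : ℝ → ℝ) (x : ℝ) :
    (∫ y in (-1:ℝ)..1, greenFunction α x y * f y) = ∫ y in (-1:ℝ)..1, Ghat α x y * f y := by
  refine intervalIntegral.integral_congr_ae ?_
  filter_upwards [ae_ne x] with y hy _
  rw [green_eq_Ghat hα (Ne.symm hy)]

/-- Claim (i): for `y` right of the midpoint, `Ghat` increases from `x₁` to `x₂`. -/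
lemma claim_i {α x₁ x₂ t : ℝ} (hα : 1 < α) (h1 : -1 ≤ x₁) (h12 : x₁ ≤ x₂) (h20 : x₂ ≤ 0)
    (ht : (x₁ + x₂) / 2 ≤ t) : Ghat α x₁ t ≤ Ghat α x₂ t := by
  by_cases hx₂ : x₂ ∈ Set.Ioo (-1:ℝ) 1
  · exact Ghat_mono hα (by nlinarith) (by nlinarith) hx₂
  · have hx2 : x₂ = -1 := by
      simp only [Set.mem_Ioo, not_and_or, not_lt] at hx₂
      rcases hx₂ with h | h
      · linarith
      · linarith
    have hx1 : x₁ = -1 := by linarith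
    rw [hx1, hx2]

lemma f_radial {f : ℝ → ℝ} (hfsymm : ∀ x ∈ Set.Icc (-1 : ℝ) 1, f (-x) = f x)
    (hfanti : AntitoneOn f (Set.Icc (0 : ℝ) 1)) {u v : ℝ}
    (huv : |u| ≤ |v|) (hv : |v| ≤ 1) : f v ≤ f u := by
  have hu : |u| ≤ 1 := huv.trans hv
  have habs : ∀ w : ℝ, |w| ≤ 1 → f w = f |w| := by
    intro w hw
    rcases le_or_gt 0 w with h | h
    · rw [abs_of_nonneg h]
    · have haw : |w| = -w := abs_of_neg h
      rw [haw, ← hfsymm (-w) ⟨by linarith, by linarith⟩, neg_neg]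
  rw [habs u hu, habs v hv]
  exact hfanti ⟨abs_nonneg u, hu⟩ ⟨abs_nonneg v, hv⟩ huv

/-- The pointwise reflection inequality. -/
lemma pair_nonneg {α x₁ x₂ t : ℝ} {f : ℝ → ℝ} (hα : 1 < α)
    (hfnonneg : ∀ x ∈ Set.Icc (-1 : ℝ) 1, 0 ≤ f x)
    (hfsymm : ∀ x ∈ Set.Icc (-1 : ℝ) 1, f (-x) = f x)
    (hfanti : AntitoneOn f (Set.Icc (0 : ℝ) 1))
    (h1 : -1 ≤ x₁) (h12 : x₁ ≤ x₂) (h20 : x₂ ≤ 0)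
    (htl : (x₁ + x₂) / 2 ≤ t) (htr : t ≤ x₁ + x₂ + 1) :
    0 ≤ (Ghat α x₂ (x₁ + x₂ - t) - Ghat α x₁ (x₁ + x₂ - t)) * f (x₁ + x₂ - t) +
      (Ghat α x₂ t - Ghat α x₁ t) * f t := by
  set z : ℝ := x₁ + x₂ - t with hzdef
  have ht1 : t ≤ 1 := by linarith
  have htm1 : -1 ≤ t := by linarith
  have hz1 : -1 ≤ z := by simp only [hzdef]; linarith
  have hzm : z ≤ 0 := by simp only [hzdef]; linarith
  have habs : |t| ≤ |z| := by
    have hsq : t ^ 2 ≤ z ^ 2 := by simp only [hzdef]; nlinarith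
    nlinarith [abs_nonneg t, abs_nonneg z, sq_abs t, sq_abs z]
  have hft : 0 ≤ f t := hfnonneg t ⟨htm1, ht1⟩
  have hfz : 0 ≤ f z := hfnonneg z ⟨hz1, by linarith⟩
  have hfzt : f z ≤ f t := f_radial hfsymm hfanti habs (by rw [abs_le]; constructor <;> linarith)
  have hΔt : Ghat α x₁ t ≤ Ghat α x₂ t := claim_i hα h1 h12 h20 htl
  rcases le_or_gt 0 (Ghat α x₂ z - Ghat α x₁ z) with h | h
  · exact add_nonneg (mul_nonneg h hfz) (mul_nonneg (by linarith) hft)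
  · have hpair := Ghat_pair hα h1 h12 h20 htl ht1 hz1
    have h2 : (Ghat α x₂ z - Ghat α x₁ z) * f t ≤ (Ghat α x₂ z - Ghat α x₁ z) * f z :=
      mul_le_mul_of_nonpos_left hfzt h.le
    nlinarith

end GPSU

namespace GPSU

/-- Core monotonicity of the potential on `[-1,0]`. -/
lemma u_mono {α : ℝ} (hα : 1 < α) {f : ℝ → ℝ}
    (hfcont : ContinuousOn f (Set.Icc (-1 : ℝ) 1))
    (hfnonneg : ∀ x ∈ Set.Icc (-1 : ℝ) 1, 0 ≤ f x)
    (hfsymm : ∀ x ∈ Set.Icc (-1 : ℝ) 1, f (-x) = f x)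
    (hfanti : AntitoneOn f (Set.Icc (0 : ℝ) 1))
    {x₁ x₂ : ℝ} (h1 : -1 ≤ x₁) (h12 : x₁ ≤ x₂) (h20 : x₂ ≤ 0) :
    (∫ y in (-1:ℝ)..1, greenFunction α x₁ y * f y) ≤
      ∫ y in (-1:ℝ)..1, greenFunction α x₂ y * f y := by
  rw [green_Ghat_integral hα f x₁, green_Ghat_integral hα f x₂]
  set Δ : ℝ → ℝ := fun y => Ghat α x₂ y * f y - Ghat α x₁ y * f y with hΔdef
  have hint₁ := Ghat_prod_integrable hα hfcont x₁
  have hint₂ := Ghat_prod_integrable hα hfcont x₂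
  have hD : IntervalIntegrable Δ volume (-1) 1 := hint₂.sub hint₁
  suffices hsuff : 0 ≤ ∫ y in (-1:ℝ)..1, Δ y by
    rw [hΔdef] at hsuff
    rw [intervalIntegral.integral_sub hint₂ hint₁] at hsuff
    linarith
  set s : ℝ := x₁ + x₂ with hsdef
  have hs2 : -2 ≤ s := by simp only [hsdef]; linarith
  have hs0 : s ≤ 0 := by simp only [hsdef]; linarith
  have hsub : ∀ a b : ℝ, -1 ≤ a → a ≤ b → b ≤ 1 → IntervalIntegrable Δ volume a b := by
    intro a b ha hab hb
    exact hD.mono_set (by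
      rw [Set.uIcc_of_le hab, Set.uIcc_of_le (by norm_num : (-1:ℝ) ≤ 1)]
      exact Set.Icc_subset_Icc ha hb)
  have i1 : IntervalIntegrable Δ volume (-1) (s/2) := hsub _ _ le_rfl (by linarith) (by linarith)
  have i2 : IntervalIntegrable Δ volume (s/2) (s+1) := hsub _ _ (by linarith) (by linarith) (by linarith)
  have i3 : IntervalIntegrable Δ volume (s+1) 1 := hsub _ _ (by linarith) (by linarith) le_rfl
  have e1 : (∫ y in (-1:ℝ)..1, Δ y) =
      (∫ y in (-1:ℝ)..(s/2), Δ y) + ((∫ y in (s/2)..(s+1), Δ y) + ∫ y in (s+1)..(1:ℝ), Δ y) := by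
    rw [intervalIntegral.integral_add_adjacent_intervals i2 i3,
      intervalIntegral.integral_add_adjacent_intervals i1 (i2.trans i3)]
  have irefl : IntervalIntegrable (fun t => Δ (s - t)) volume (s/2) (s+1) := by
    have := i1.comp_sub_left s
    rw [show s - (-1:ℝ) = s + 1 by ring, show s - s/2 = s/2 by ring] at this
    exact this.symm
  have erefl : (∫ y in (-1:ℝ)..(s/2), Δ y) = ∫ t in (s/2)..(s+1), Δ (s - t) := by
    have h := intervalIntegral.integral_comp_sub_left (a := s/2) (b := s+1) Δ s
    rw [show s - (s+1) = (-1:ℝ) by ring, show s - s/2 = s/2 by ring] at h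
    exact h.symm
  have eadd : (∫ t in (s/2)..(s+1), Δ (s - t)) + (∫ t in (s/2)..(s+1), Δ t) =
      ∫ t in (s/2)..(s+1), (Δ (s - t) + Δ t) :=
    (intervalIntegral.integral_add irefl i2).symm
  have n1 : 0 ≤ ∫ t in (s/2)..(s+1), (Δ (s - t) + Δ t) := by
    refine intervalIntegral.integral_nonneg (by linarith) (fun t ht => ?_)
    have hp := pair_nonneg (α := α) (f := f) hα hfnonneg hfsymm hfanti h1 h12 h20
      (by simp only [← hsdef]; exact ht.1) (by simp only [← hsdef]; exact ht.2)
    have heq : Δ (s - t) + Δ t =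
        (Ghat α x₂ (x₁ + x₂ - t) - Ghat α x₁ (x₁ + x₂ - t)) * f (x₁ + x₂ - t) +
        (Ghat α x₂ t - Ghat α x₁ t) * f t := by
      simp only [hΔdef, hsdef]; ring
    rw [heq]; exact hp
  have n2 : 0 ≤ ∫ t in (s+1)..(1:ℝ), Δ t := by
    refine intervalIntegral.integral_nonneg (by linarith) (fun t ht => ?_)
    have h1t : -1 ≤ t := by linarith [ht.1]
    have h2t : t ≤ 1 := ht.2
    have hgi : Ghat α x₁ t ≤ Ghat α x₂ t := claim_i hα h1 h12 h20 (by linarith [ht.1])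
    have hf : 0 ≤ f t := hfnonneg t ⟨h1t, h2t⟩
    have : Δ t = (Ghat α x₂ t - Ghat α x₁ t) * f t := by simp only [hΔdef]; ring
    rw [this]
    exact mul_nonneg (by linarith) hf
  rw [e1, erefl]
  linarith [eadd, n1, n2]

end GPSU

namespace GPSU

lemma u_symm {α : ℝ} {f : ℝ → ℝ} (hfsymm : ∀ x ∈ Set.Icc (-1 : ℝ) 1, f (-x) = f x) (x : ℝ) :
    (∫ y in (-1:ℝ)..1, greenFunction α (-x) y * f y) =
      ∫ y in (-1:ℝ)..1, greenFunction α x y * f y := by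
  have h := intervalIntegral.integral_comp_neg (a := (-1:ℝ)) (b := 1)
    (fun y => greenFunction α x y * f y)
  norm_num at h
  rw [← h]
  refine intervalIntegral.integral_congr (fun y hy => ?_)
  rw [Set.uIcc_of_le (by norm_num : (-1:ℝ) ≤ 1)] at hy
  have hg : greenFunction α x (-y) = greenFunction α (-x) y := by
    have := green_neg_neg α (-x) y
    rw [neg_neg] at this
    exact this
  show greenFunction α (-x) y * f y = greenFunction α x (-y) * f (-y)
  rw [hg, hfsymm y hy]

end GPSU


end GPSUlemmas

/-- If `f` is continuous, nonnegative, symmetric and unimodal on `[-1,1]`,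
then `u(x) = ∫_{-1}^{1} G_α(x,y) f(y) dy` is symmetric and unimodal on `[-1,1]`. -/
theorem green_preserves_symmetric_unimodal (α : ℝ) (hα : α ∈ Set.Ioo (1 : ℝ) 2)
    (f : ℝ → ℝ) (hfcont : ContinuousOn f (Set.Icc (-1 : ℝ) 1))
    (hfnonneg : ∀ x ∈ Set.Icc (-1 : ℝ) 1, 0 ≤ f x)
    (hfsymm : ∀ x ∈ Set.Icc (-1 : ℝ) 1, f (-x) = f x)
    (hfmono : MonotoneOn f (Set.Icc (-1 : ℝ) 0))
    (hfanti : AntitoneOn f (Set.Icc (0 : ℝ) 1)) :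
    (∀ x ∈ Set.Icc (-1 : ℝ) 1,
      (∫ y in (-1 : ℝ)..1, greenFunction α (-x) y * f y) =
        ∫ y in (-1 : ℝ)..1, greenFunction α x y * f y) ∧
    MonotoneOn (fun x => ∫ y in (-1 : ℝ)..1, greenFunction α x y * f y)
      (Set.Icc (-1 : ℝ) 0) ∧
    AntitoneOn (fun x => ∫ y in (-1 : ℝ)..1, greenFunction α x y * f y)
      (Set.Icc (0 : ℝ) 1) := by
  obtain ⟨hα1, hα2⟩ := hα
  refine ⟨fun x _ => GPSU.u_symm hfsymm x, ?_, ?_⟩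
  · intro a ha b hb hab
    exact GPSU.u_mono hα1 hfcont hfnonneg hfsymm hfanti ha.1 hab hb.2
  · intro a ha b hb hab
    have h1 : (∫ y in (-1:ℝ)..1, greenFunction α b y * f y) =
        ∫ y in (-1:ℝ)..1, greenFunction α (-b) y * f y := (GPSU.u_symm hfsymm b).symm
    have h2 : (∫ y in (-1:ℝ)..1, greenFunction α a y * f y) =
        ∫ y in (-1:ℝ)..1, greenFunction α (-a) y * f y := (GPSU.u_symm hfsymm a).symm
    simp only []
    rw [h1, h2]
    exact GPSU.u_mono hα1 hfcont hfnonneg hfsymm hfanti (by linarith [hb.2])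
      (by linarith) (by linarith [ha.1])
end

section
/- Let α ∈ (1,2) and a ∈ (0,1). There exists a constant c > 0 such that for every x ∈ (−a,a) and every y ∈ (−1,1) with x ≠ y, one has G_α(x,y) ≥ c·(1−|y|)^{α/2}. -/
open MeasureTheory

private lemma green_aux_integrable {α : ℝ} (hα : 1 < α) (u v : ℝ)
    (hu : 0 ≤ u) (hv : 0 ≤ v) :
    IntervalIntegrable (fun r : ℝ => r ^ (α / 2 - 1) * (r + 1) ^ (-(1 : ℝ) / 2))
      volume u v := by
  apply (intervalIntegral.intervalIntegrable_rpow' (by linarith)).mul_continuousOn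
  apply ContinuousOn.rpow_const
  · exact (continuous_id.add continuous_const).continuousOn
  · intro r hr
    left
    have h0 : 0 ≤ r := by
      rcases Set.mem_uIcc.mp hr with ⟨h, _⟩ | ⟨h, _⟩ <;> linarith
    positivity

private lemma green_aux_half : (1 : ℝ) / 2 ≤ (2 : ℝ) ^ (-(1 : ℝ) / 2) := by
  have h : (2 : ℝ) ^ (-(1 : ℝ)) ≤ (2 : ℝ) ^ (-(1 : ℝ) / 2) :=
    Real.rpow_le_rpow_of_exponent_le one_le_two (by norm_num)
  rwa [Real.rpow_neg_one, show ((2 : ℝ))⁻¹ = 1 / 2 by norm_num] at h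

set_option maxHeartbeats 2000000 in
/-- Lower bound `G_α(x,y) ≥ c (1-|y|)^(α/2)` for `x ∈ (-a,a)`,
`y ∈ (-1,1)`, `x ≠ y`. -/
theorem green_lower_bound (α a : ℝ) (hα : α ∈ Set.Ioo (1 : ℝ) 2)
    (ha : a ∈ Set.Ioo (0 : ℝ) 1) :
    ∃ c : ℝ, 0 < c ∧ ∀ x ∈ Set.Ioo (-a) a, ∀ y ∈ Set.Ioo (-1 : ℝ) 1, x ≠ y →
      c * (1 - |y|) ^ (α / 2) ≤ greenFunction α x y := by
  obtain ⟨hα1, hα2⟩ := hα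
  obtain ⟨ha0, ha1⟩ := ha
  have hΓ : 0 < Real.Gamma (α / 2) := Real.Gamma_pos_of_pos (by linarith)
  set K : ℝ := (2 ^ α * Real.Gamma (α / 2) ^ 2)⁻¹ with hKdef
  have hK : 0 < K := by rw [hKdef]; positivity
  have ha2 : 0 < 1 - a ^ 2 := by nlinarith
  refine ⟨K * (1 - a ^ 2) / 4, by positivity, ?_⟩
  intro x hx y hy hxy
  obtain ⟨hx1, hx2⟩ := hx
  obtain ⟨hy1, hy2⟩ := hy
  have hx1' : (-1 : ℝ) < x := by linarith
  have hx2' : x < 1 := by linarith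
  set d : ℝ := |x - y| with hd
  have hd0 : 0 < d := abs_pos.mpr (sub_ne_zero.mpr hxy)
  have hd2 : d ≤ 2 := by
    rw [hd, abs_sub_le_iff]
    constructor <;> linarith
  set P : ℝ := (1 - x ^ 2) * (1 - y ^ 2) with hPdef
  have hP : 0 < P := by
    rw [hPdef]
    have h1 : x ^ 2 < 1 := by nlinarith
    have h2 : y ^ 2 < 1 := by nlinarith
    nlinarith
  set w : ℝ := (1 - x ^ 2) * (1 - y ^ 2) / (x - y) ^ 2 with hwdef
  have hxy2 : 0 < (x - y) ^ 2 := by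
    have h := sub_ne_zero.mpr hxy
    positivity
  have hw0 : 0 < w := by rw [hwdef]; exact div_pos hP hxy2
  have hsq : (x - y) ^ 2 = d ^ 2 := by rw [hd, sq_abs]
  set I : ℝ := ∫ r in (0 : ℝ)..w, r ^ (α / 2 - 1) * (r + 1) ^ (-(1 : ℝ) / 2)
    with hIdef
  have hG : greenFunction α x y = K * d ^ (α - 1) * I := by
    rw [hIdef, hwdef, hKdef, hd]
    simp only [greenFunction]
    rw [if_pos ⟨⟨hx1', hx2'⟩, ⟨hy1, hy2⟩⟩]
  -- nonnegativity of the integrand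
  clear_value K d P w I
  have hfnn : ∀ r : ℝ, 0 ≤ r → 0 ≤ r ^ (α / 2 - 1) * (r + 1) ^ (-(1 : ℝ) / 2) :=
    fun r hr => mul_nonneg (Real.rpow_nonneg hr _) (Real.rpow_nonneg (by linarith) _)
  -- bounds on |y|
  have hyabs : |y| < 1 := abs_lt.mpr ⟨hy1, hy2⟩
  have hy0 : 0 < 1 - |y| := by linarith
  have hy1' : 1 - |y| ≤ 1 := by
    have := abs_nonneg y
    linarith
  have hPlow : (1 - a ^ 2) * (1 - |y|) ≤ P := by
    rw [hPdef]
    have h1 : 1 - a ^ 2 ≤ 1 - x ^ 2 := by nlinarith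
    have h2 : 1 - |y| ≤ 1 - y ^ 2 := by nlinarith [sq_abs y, abs_nonneg y]
    exact mul_le_mul h1 h2 hy0.le (by nlinarith)
  -- key comparison of P^s with the target
  have key : ∀ s : ℝ, 0 < s → s ≤ α / 2 →
      (1 - a ^ 2) * (1 - |y|) ^ (α / 2) ≤ P ^ s := by
    intro s hs0 hs1
    have hs1' : s ≤ 1 := by linarith
    have h1 : ((1 - a ^ 2) * (1 - |y|)) ^ s ≤ P ^ s :=
      Real.rpow_le_rpow (by positivity) hPlow hs0.le
    rw [Real.mul_rpow ha2.le hy0.le] at h1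
    have h2 : 1 - a ^ 2 ≤ (1 - a ^ 2) ^ s := by
      nth_rewrite 1 [← Real.rpow_one (1 - a ^ 2)]
      exact Real.rpow_le_rpow_of_exponent_ge ha2 (by nlinarith) hs1'
    have h3 : (1 - |y|) ^ (α / 2) ≤ (1 - |y|) ^ s :=
      Real.rpow_le_rpow_of_exponent_ge hy0 hy1' hs1
    calc (1 - a ^ 2) * (1 - |y|) ^ (α / 2)
        ≤ (1 - a ^ 2) ^ s * (1 - |y|) ^ s :=
          mul_le_mul h2 h3 (Real.rpow_nonneg hy0.le _) (Real.rpow_nonneg ha2.le _)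
      _ ≤ P ^ s := h1
  have hdpow : 0 < d ^ (α - 1) := Real.rpow_pos_of_pos hd0 _
  rcases le_or_gt w 1 with hw1 | hw1
  · -- case w ≤ 1
    have hpt : ∀ r ∈ Set.Icc (0 : ℝ) w,
        r ^ (α / 2 - 1) * (1 / 2) ≤ r ^ (α / 2 - 1) * (r + 1) ^ (-(1 : ℝ) / 2) := by
      intro r ⟨hr0, hrw⟩
      have e1 : (2 : ℝ) ^ (-(1 : ℝ) / 2) ≤ (r + 1) ^ (-(1 : ℝ) / 2) :=
        Real.rpow_le_rpow_of_nonpos (by linarith) (by linarith) (by norm_num)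
      have e2 := green_aux_half
      exact mul_le_mul_of_nonneg_left (by linarith) (Real.rpow_nonneg hr0 _)
    have hmono : (∫ r in (0 : ℝ)..w, r ^ (α / 2 - 1) * (1 / 2)) ≤ I := by
      rw [hIdef]
      refine intervalIntegral.integral_mono_on hw0.le
        ((intervalIntegral.intervalIntegrable_rpow' (by linarith)).mul_const _)
        (green_aux_integrable hα1 0 w le_rfl hw0.le) hpt
    have hcomp : (∫ r in (0 : ℝ)..w, r ^ (α / 2 - 1) * (1 / 2))
        = w ^ (α / 2) / (α / 2) * (1 / 2) := by
      rw [intervalIntegral.integral_mul_const, integral_rpow (Or.inl (by linarith))]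
      rw [show α / 2 - 1 + 1 = α / 2 by ring, Real.zero_rpow (by linarith)]
      ring
    have hwnn : 0 ≤ w ^ (α / 2) := Real.rpow_nonneg hw0.le _
    have hI1 : w ^ (α / 2) ≤ 2 * I := by
      have hdiv : w ^ (α / 2) ≤ w ^ (α / 2) / (α / 2) := by
        rw [le_div_iff₀ (by linarith)]
        nlinarith
      nlinarith [hmono, hcomp]
    -- algebra: d^(α-1) * w^(α/2) * d = P^(α/2)
    have hid : d ^ (α - 1) * w ^ (α / 2) * d = P ^ (α / 2) := by
      have h1 : w ^ (α / 2) = P ^ (α / 2) / d ^ α := by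
        rw [hwdef, hsq, ← hPdef, Real.div_rpow hP.le (by positivity),
          ← Real.rpow_natCast d 2, ← Real.rpow_mul hd0.le]
        rw [show ((2 : ℕ) : ℝ) * (α / 2) = α by push_cast; ring]
      have hda : d ^ (α - 1) * d = d ^ α := by
        rw [← Real.rpow_add_one hd0.ne']
        congr 1
        ring
      calc d ^ (α - 1) * w ^ (α / 2) * d
          = P ^ (α / 2) / d ^ α * (d ^ (α - 1) * d) := by rw [h1]; ring
        _ = P ^ (α / 2) / d ^ α * d ^ α := by rw [hda]
        _ = P ^ (α / 2) := div_mul_cancel₀ _ (Real.rpow_pos_of_pos hd0 α).ne'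
    have hk := key (α / 2) (by linarith) le_rfl
    have hchain : (1 - a ^ 2) * (1 - |y|) ^ (α / 2) ≤ 4 * (d ^ (α - 1) * I) := by
      have h5 : d ^ (α - 1) * w ^ (α / 2) * d ≤ d ^ (α - 1) * (2 * I) * 2 := by
        have h6 := mul_le_mul_of_nonneg_left hI1 hdpow.le
        have hA : 0 ≤ d ^ (α - 1) * w ^ (α / 2) := mul_nonneg hdpow.le hwnn
        exact mul_le_mul h6 hd2 hd0.le (hA.trans h6)
      linarith [hk, hid, h5]
    rw [hG]
    linarith [mul_le_mul_of_nonneg_left hchain hK.le]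
  · -- case 1 < w
    have hsplit : I = (∫ r in (0 : ℝ)..(w / 2),
          r ^ (α / 2 - 1) * (r + 1) ^ (-(1 : ℝ) / 2))
        + ∫ r in (w / 2)..w, r ^ (α / 2 - 1) * (r + 1) ^ (-(1 : ℝ) / 2) := by
      rw [hIdef]
      exact (intervalIntegral.integral_add_adjacent_intervals
        (green_aux_integrable hα1 0 (w / 2) le_rfl (by linarith))
        (green_aux_integrable hα1 (w / 2) w (by linarith) hw0.le)).symm
    have h1 : 0 ≤ ∫ r in (0 : ℝ)..(w / 2),
        r ^ (α / 2 - 1) * (r + 1) ^ (-(1 : ℝ) / 2) :=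
      intervalIntegral.integral_nonneg (by linarith)
        (fun r hr => hfnn r hr.1)
    have hpt : ∀ r ∈ Set.Icc (w / 2) w,
        w ^ (α / 2 - 1) * (2 * w) ^ (-(1 : ℝ) / 2)
          ≤ r ^ (α / 2 - 1) * (r + 1) ^ (-(1 : ℝ) / 2) := by
      intro r ⟨hrl, hrw⟩
      have hr0 : 0 < r := by linarith
      have t1 : w ^ (α / 2 - 1) ≤ r ^ (α / 2 - 1) :=
        Real.rpow_le_rpow_of_nonpos hr0 hrw (by linarith)
      have t2 : (2 * w) ^ (-(1 : ℝ) / 2) ≤ (r + 1) ^ (-(1 : ℝ) / 2) :=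
        Real.rpow_le_rpow_of_nonpos (by linarith) (by linarith) (by norm_num)
      exact mul_le_mul t1 t2 (Real.rpow_nonneg (by linarith) _)
        (Real.rpow_nonneg hr0.le _)
    have h2 : (w - w / 2) * (w ^ (α / 2 - 1) * (2 * w) ^ (-(1 : ℝ) / 2))
        ≤ ∫ r in (w / 2)..w, r ^ (α / 2 - 1) * (r + 1) ^ (-(1 : ℝ) / 2) := by
      have := intervalIntegral.integral_mono_on (by linarith : w / 2 ≤ w)
        intervalIntegrable_const
        (green_aux_integrable hα1 (w / 2) w (by linarith) hw0.le) hpt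
      rwa [intervalIntegral.integral_const, smul_eq_mul] at this
    have halg : w ^ (α / 2 - 1) * w ^ (-(1 : ℝ) / 2) * w = w ^ ((α - 1) / 2) := by
      rw [← Real.rpow_add hw0, ← Real.rpow_add_one hw0.ne']
      congr 1
      ring
    have h3 : w ^ ((α - 1) / 2) / 4
        ≤ (w - w / 2) * (w ^ (α / 2 - 1) * (2 * w) ^ (-(1 : ℝ) / 2)) := by
      have hT : 0 ≤ w ^ ((α - 1) / 2) := Real.rpow_nonneg hw0.le _
      have step : (w - w / 2) * (w ^ (α / 2 - 1) * (2 * w) ^ (-(1 : ℝ) / 2))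
          = (2 : ℝ) ^ (-(1 : ℝ) / 2) * w ^ ((α - 1) / 2) / 2 := by
        rw [Real.mul_rpow (by norm_num) hw0.le, ← halg]
        ring
      rw [step]
      have := mul_le_mul_of_nonneg_right green_aux_half hT
      linarith
    have hI2 : w ^ ((α - 1) / 2) ≤ 4 * I := by
      rw [hsplit]
      linarith
    have hid : d ^ (α - 1) * w ^ ((α - 1) / 2) = P ^ ((α - 1) / 2) := by
      have h1 : w ^ ((α - 1) / 2) = P ^ ((α - 1) / 2) / d ^ (α - 1) := by
        rw [hwdef, hsq, ← hPdef, Real.div_rpow hP.le (by positivity),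
          ← Real.rpow_natCast d 2, ← Real.rpow_mul hd0.le]
        rw [show ((2 : ℕ) : ℝ) * ((α - 1) / 2) = α - 1 by push_cast; ring]
      rw [h1, mul_comm, div_mul_cancel₀ _ (Real.rpow_pos_of_pos hd0 _).ne']
    have hk := key ((α - 1) / 2) (by linarith) (by linarith)
    have hchain : (1 - a ^ 2) * (1 - |y|) ^ (α / 2) ≤ 4 * (d ^ (α - 1) * I) := by
      have h5 : d ^ (α - 1) * w ^ ((α - 1) / 2) ≤ d ^ (α - 1) * (4 * I) :=
        mul_le_mul_of_nonneg_left hI2 hdpow.le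
      linarith [hk, hid, h5]
    rw [hG]
    linarith [mul_le_mul_of_nonneg_left hchain hK.le]
end

section
/- Let α ∈ (1,2). For all y, v ∈ (0,1) with y ≠ v, one has G_α(y,v) ≥ G_α(−y,v). -/
open MeasureTheory

lemma green_integrable (α A c : ℝ) (hα : 1 < α) (hA : 0 ≤ A) (hc : 0 < c) :
    IntervalIntegrable (fun t : ℝ => t ^ (α / 2 - 1) * (t + c) ^ (-(1 : ℝ) / 2))
      volume 0 A := by
  apply IntervalIntegrable.mul_continuousOn
  · exact intervalIntegral.intervalIntegrable_rpow' (by linarith)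
  · apply ContinuousOn.rpow_const
    · exact (continuousOn_id.add continuousOn_const)
    · intro x hx
      rw [Set.uIcc_of_le hA] at hx
      exact Or.inl (by simp only [Set.mem_Icc] at hx; nlinarith [hx.1])

/-- Key substitution identity. -/
lemma green_subst (α A d : ℝ) (hα : 1 < α) (hA : 0 ≤ A) (hd : 0 < d) :
    d ^ (α - 1) * ∫ r in (0 : ℝ)..(A / d ^ 2),
        r ^ (α / 2 - 1) * (r + 1) ^ (-(1 : ℝ) / 2)
      = ∫ t in (0 : ℝ)..A, t ^ (α / 2 - 1) * (t + d ^ 2) ^ (-(1 : ℝ) / 2) := by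
  have hd2 : (d ^ 2 : ℝ) ≠ 0 := by positivity
  have hd2p : (0 : ℝ) < d ^ 2 := by positivity
  have hP : ∀ c : ℝ, ((d ^ 2 : ℝ)) ^ c = d ^ (2 * c) := by
    intro c
    rw [← Real.rpow_natCast d 2, ← Real.rpow_mul hd.le]
    norm_num
  have hcomp := intervalIntegral.integral_comp_div (a := (0 : ℝ)) (b := A) (c := d ^ 2)
      (f := fun r => r ^ (α / 2 - 1) * (r + 1) ^ (-(1 : ℝ) / 2)) hd2
  rw [zero_div, smul_eq_mul] at hcomp
  have hcongr : (∫ t in (0 : ℝ)..A, (t / d ^ 2) ^ (α / 2 - 1) * (t / d ^ 2 + 1) ^ (-(1 : ℝ) / 2))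
      = ∫ t in (0 : ℝ)..A,
          (d ^ (2 - α) * d) * (t ^ (α / 2 - 1) * (t + d ^ 2) ^ (-(1 : ℝ) / 2)) := by
    apply intervalIntegral.integral_congr
    intro t ht
    rw [Set.uIcc_of_le hA, Set.mem_Icc] at ht
    have ht0 : 0 ≤ t := ht.1
    have e1 : (t / d ^ 2) ^ (α / 2 - 1) = t ^ (α / 2 - 1) / d ^ (2 * (α / 2 - 1)) := by
      rw [Real.div_rpow ht0 hd2p.le, hP]
    have e2 : t / d ^ 2 + 1 = (t + d ^ 2) / d ^ 2 := by field_simp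
    have e3 : (t / d ^ 2 + 1) ^ (-(1 : ℝ) / 2)
        = (t + d ^ 2) ^ (-(1 : ℝ) / 2) / d ^ (2 * (-(1 : ℝ) / 2)) := by
      rw [e2, Real.div_rpow (by positivity) hd2p.le, hP]
    beta_reduce
    rw [e1, e3]
    have e4 : d ^ (2 * (α / 2 - 1)) = d ^ (α - 2) := by ring_nf
    have e5 : d ^ (2 * (-(1 : ℝ) / 2)) = d⁻¹ := by
      norm_num [Real.rpow_neg_one]
    have e6 : d ^ (2 - α) = (d ^ (α - 2))⁻¹ := by
      rw [show (2 - α) = -(α - 2) by ring, Real.rpow_neg hd.le]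
    have hdα : (0 : ℝ) < d ^ (α - 2) := Real.rpow_pos_of_pos hd _
    rw [e4, e5, e6]
    field_simp
  rw [hcongr, intervalIntegral.integral_const_mul] at hcomp
  have hT := hcomp
  -- hT : (d^(2-α)*d) * T = d^2 * ∫_0^{A/d²} f
  have hne : (d ^ (2 - α) * d : ℝ) ≠ 0 := by
    have := Real.rpow_pos_of_pos hd (2 - α); positivity
  have e7 : d ^ (α - 1) * (d ^ (2 - α) * d) = d ^ 2 := by
    have h8 : d ^ (α - 1) * d ^ (2 - α) = d := by
      rw [← Real.rpow_add hd]; norm_num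
    calc d ^ (α - 1) * (d ^ (2 - α) * d) = (d ^ (α - 1) * d ^ (2 - α)) * d := by ring
      _ = d * d := by rw [h8]
      _ = d ^ 2 := by ring
  have := congrArg (fun z => d ^ (α - 1) * z / d ^ 2) hT.symm
  calc d ^ (α - 1) * ∫ r in (0 : ℝ)..(A / d ^ 2),
          r ^ (α / 2 - 1) * (r + 1) ^ (-(1 : ℝ) / 2)
      = d ^ (α - 1) * (d ^ 2 * ∫ r in (0 : ℝ)..(A / d ^ 2),
          r ^ (α / 2 - 1) * (r + 1) ^ (-(1 : ℝ) / 2)) / d ^ 2 := by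
        field_simp
    _ = d ^ (α - 1) * ((d ^ (2 - α) * d) *
          ∫ t in (0 : ℝ)..A, t ^ (α / 2 - 1) * (t + d ^ 2) ^ (-(1 : ℝ) / 2)) / d ^ 2 := by
        rw [hT]
    _ = ∫ t in (0 : ℝ)..A, t ^ (α / 2 - 1) * (t + d ^ 2) ^ (-(1 : ℝ) / 2) := by
        rw [← mul_assoc, e7]; field_simp

/-- For `y, v ∈ (0,1)` with `y ≠ v` one has `G_α(y,v) ≥ G_α(-y,v)`. -/
theorem green_reflection_ineq (α : ℝ) (hα : α ∈ Set.Ioo (1 : ℝ) 2) :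
    ∀ y ∈ Set.Ioo (0 : ℝ) 1, ∀ v ∈ Set.Ioo (0 : ℝ) 1, y ≠ v →
      greenFunction α (-y) v ≤ greenFunction α y v := by
  obtain ⟨hα1, hα2⟩ := hα
  intro y hy v hv hne
  obtain ⟨hy0, hy1⟩ := hy
  obtain ⟨hv0, hv1⟩ := hv
  have hmem1 : (-y : ℝ) ∈ Set.Ioo (-1 : ℝ) 1 := ⟨by linarith, by linarith⟩
  have hmem2 : (y : ℝ) ∈ Set.Ioo (-1 : ℝ) 1 := ⟨by linarith, by linarith⟩
  have hmem3 : (v : ℝ) ∈ Set.Ioo (-1 : ℝ) 1 := ⟨by linarith, by linarith⟩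
  rw [greenFunction, greenFunction, if_pos ⟨hmem1, hmem3⟩, if_pos ⟨hmem2, hmem3⟩]
  set A : ℝ := (1 - y ^ 2) * (1 - v ^ 2) with hAdef
  have hA : 0 < A := by
    apply mul_pos <;> nlinarith
  set d1 : ℝ := |y - v| with hd1def
  set d2 : ℝ := y + v with hd2def
  have hd1 : 0 < d1 := abs_pos.mpr (sub_ne_zero.mpr hne)
  have hd2 : 0 < d2 := by simp only [hd2def]; linarith
  have hle : d1 ≤ d2 := by
    rw [hd1def, hd2def, abs_sub_le_iff]
    constructor <;> linarith
  have habs2 : |(-y) - v| = d2 := by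
    rw [show (-y) - v = -(y + v) by ring, abs_neg, abs_of_pos hd2]
  have hsq1 : (y - v) ^ 2 = d1 ^ 2 := (sq_abs _).symm
  have hsq2 : ((-y) - v) ^ 2 = d2 ^ 2 := by
    rw [show (-y) - v = -(y + v) by ring]; ring
  have hnum1 : (1 - (-y) ^ 2) * (1 - v ^ 2) = A := by rw [hAdef]; ring
  have hnum2 : (1 - y ^ 2) * (1 - v ^ 2) = A := rfl
  rw [mul_assoc, mul_assoc, habs2, hsq1, hsq2, hnum1,
    green_subst α A d2 hα1 hA.le hd2, green_subst α A d1 hα1 hA.le hd1]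
  have hC : (0 : ℝ) ≤ (2 ^ α * Real.Gamma (α / 2) ^ 2)⁻¹ := by
    have h2 : (0 : ℝ) < 2 ^ α := Real.rpow_pos_of_pos two_pos α
    have hg : 0 < Real.Gamma (α / 2) := Real.Gamma_pos_of_pos (by linarith)
    positivity
  apply mul_le_mul_of_nonneg_left _ hC
  apply intervalIntegral.integral_mono_on hA.le
    (green_integrable α A (d2 ^ 2) hα1 hA.le (by positivity))
    (green_integrable α A (d1 ^ 2) hα1 hA.le (by positivity))
  intro t ht
  apply mul_le_mul_of_nonneg_left _ (Real.rpow_nonneg ht.1 _)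
  apply Real.rpow_le_rpow_of_nonpos (by nlinarith [ht.1]) (by nlinarith) (by norm_num)
end
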